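/- arXiv:2305.15828 — 5 statements merged into one kernel-verified Lean document; each statement's English description precedes it below -/
import Mathlib

section
/- Let f : ℝ^d → ℝ be differentiable with L₂-Lipschitz gradient, bounded below with infimum f*, and satisfying the Polyak–Łojasiewicz condition with constant μ > 0. Fix x ∈ ℝ^d and let g be a square-integrable random vector in ℝ^d whose mean is E[g] = ∇f(x) + b for some b ∈ ℝ^d, and which satisfies E[‖g − E[g]‖₂²] ≤ M‖∇f(x) + b‖₂² + σ² and ‖b‖₂² ≤ m‖∇f(x)‖₂² + ζ², where M ≥ 0, σ² ≥ 0, 0 ≤ m < 1 and ζ² ≥ 0. Then for every step size 0 < η ≤ 1/((M+1)L₂), one step of biased stochastic gradient descent satisfies E[f(x − η g)] − f* ≤ (1 − ημ(1−m))(f(x) − f*) + ηζ²/2 + η²L₂σ²/2. -/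
/-!
Along the segment from `x` to `y`, the Lipschitz gradient makes `f` lie below its tangent
parabola with curvature `L` (the descent lemma). Applied at `y = x - η g` and averaged, this bounds
`E f(x - η g)` by `f x - η ⟪∇f x, E g⟫ + η² L / 2 E‖g‖²`. The variance bound controls `E‖g‖²` by
`(M + 1)‖E g‖² + σ²`, and the step-size condition turns the first part into `η / 2 ‖E g‖²`.
Expanding `E g = ∇f x + b` leaves `f x - η / 2 (‖∇f x‖² - ‖b‖²)`, and the bias bound followed by
the Polyak–Łojasiewicz inequality gives the contraction.
-/

open MeasureTheory
open scoped RealInnerProductSpace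

section InnerProductSpace

variable {E : Type*} [NormedAddCommGroup E] [InnerProductSpace ℝ E] [CompleteSpace E]

theorem le_add_inner_gradient_add_sq_of_lipschitz_gradient {f : E → ℝ} {L : ℝ}
    (hf : Differentiable ℝ f)
    (hlip : ∀ x y, ‖gradient f x - gradient f y‖ ≤ L * ‖x - y‖) (x y : E) :
    f y ≤ f x + ⟪gradient f x, y - x⟫ + L / 2 * ‖y - x‖ ^ 2 := by
  set v := y - x
  -- `φ` is the gap between `f` and its claimed quadratic majorant along the segment `[x, y]`.
  let φ : ℝ → ℝ := fun t ↦ f (x + t • v) - t * ⟪gradient f x, v⟫ - L / 2 * t ^ 2 * ‖v‖ ^ 2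
  have hφ' : ∀ t, HasDerivAt φ
      (⟪gradient f (x + t • v) - gradient f x, v⟫ - L * t * ‖v‖ ^ 2) t := by
    intro t
    have hline : HasDerivAt (fun s : ℝ ↦ x + s • v) v t := by
      simpa using ((hasDerivAt_id t).smul_const v).const_add x
    have hfline := (hf (x + t • v)).hasGradientAt.hasFDerivAt.comp_hasDerivAt t hline
    refine ((hfline.sub ((hasDerivAt_id t).mul_const ⟪gradient f x, v⟫)).sub
      (((hasDerivAt_pow 2 t).const_mul (L / 2)).mul_const (‖v‖ ^ 2))).congr_deriv ?_
    rw [inner_sub_left, InnerProductSpace.toDual_apply_apply]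
    ring
  have hanti : AntitoneOn φ (Set.Icc 0 1) := by
    refine antitoneOn_of_hasDerivWithinAt_nonpos (convex_Icc 0 1)
      (HasDerivAt.continuousOn fun t _ ↦ hφ' t) (fun t _ ↦ (hφ' t).hasDerivWithinAt) ?_
    intro t ht
    rw [interior_Icc] at ht
    have hgrowth : ⟪gradient f (x + t • v) - gradient f x, v⟫ ≤ L * t * ‖v‖ ^ 2 :=
      calc ⟪gradient f (x + t • v) - gradient f x, v⟫
          ≤ ‖gradient f (x + t • v) - gradient f x‖ * ‖v‖ := real_inner_le_norm _ _
        _ ≤ L * ‖t • v‖ * ‖v‖ := by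
          gcongr
          simpa using hlip (x + t • v) x
        _ = L * t * ‖v‖ ^ 2 := by
          rw [norm_smul, Real.norm_of_nonneg ht.1.le]
          ring
    linarith
  have h := hanti (Set.left_mem_Icc.2 zero_le_one) (Set.right_mem_Icc.2 zero_le_one) zero_le_one
  simp only [φ, v, one_smul, zero_smul, add_zero, add_sub_cancel] at h
  linarith

section Expectation

variable {Ω : Type*} {m0 : MeasurableSpace Ω} {ℙ : Measure Ω} [IsProbabilityMeasure ℙ]
  {g : Ω → E}

theorem integral_norm_sub_integral_sq (hg : MemLp g 2 ℙ) :
    ∫ ω, ‖g ω - ∫ ω', g ω' ∂ℙ‖ ^ 2 ∂ℙ = ∫ ω, ‖g ω‖ ^ 2 ∂ℙ - ‖∫ ω, g ω ∂ℙ‖ ^ 2 := by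
  set c := ∫ ω, g ω ∂ℙ
  have hg1 : Integrable g ℙ := hg.integrable one_le_two
  have hsq : Integrable (fun ω ↦ ‖g ω‖ ^ 2) ℙ := (memLp_two_iff_integrable_sq_norm hg.1).mp hg
  have hinner : Integrable (fun ω ↦ 2 * ⟪c, g ω⟫) ℙ := (hg1.const_inner c).const_mul 2
  calc ∫ ω, ‖g ω - c‖ ^ 2 ∂ℙ = ∫ ω, (‖g ω‖ ^ 2 - 2 * ⟪c, g ω⟫ + ‖c‖ ^ 2) ∂ℙ := by
        simp only [norm_sub_sq_real, real_inner_comm c]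
    _ = ∫ ω, ‖g ω‖ ^ 2 ∂ℙ - ‖c‖ ^ 2 := by
        rw [integral_add (f := fun ω ↦ ‖g ω‖ ^ 2 - 2 * ⟪c, g ω⟫) (hsq.sub hinner)
          (integrable_const _), integral_sub hsq hinner, integral_const_mul,
          integral_inner hg1, real_inner_self_eq_norm_sq]
        simp only [integral_const, probReal_univ, one_smul]
        ring

theorem integral_comp_sub_smul_le {f : E → ℝ} {L : ℝ} (hf : Differentiable ℝ f)
    (hlip : ∀ x y, ‖gradient f x - gradient f y‖ ≤ L * ‖x - y‖) (hbdd : BddBelow (Set.range f))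
    (hg : MemLp g 2 ℙ) (x : E) (η : ℝ) :
    ∫ ω, f (x - η • g ω) ∂ℙ ≤
      f x - η * ⟪gradient f x, ∫ ω, g ω ∂ℙ⟫ + η ^ 2 * L / 2 * ∫ ω, ‖g ω‖ ^ 2 ∂ℙ := by
  obtain ⟨fmin, hfmin⟩ := hbdd
  have hg1 : Integrable g ℙ := hg.integrable one_le_two
  have hsq : Integrable (fun ω ↦ ‖g ω‖ ^ 2) ℙ := (memLp_two_iff_integrable_sq_norm hg.1).mp hg
  have hlinear : Integrable (fun ω ↦ f x - η * ⟪gradient f x, g ω⟫) ℙ :=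
    (integrable_const _).sub ((hg1.const_inner _).const_mul η)
  have hbound : ∀ ω, f (x - η • g ω) ≤
      f x - η * ⟪gradient f x, g ω⟫ + η ^ 2 * L / 2 * ‖g ω‖ ^ 2 := by
    intro ω
    have h := le_add_inner_gradient_add_sq_of_lipschitz_gradient hf hlip x (x - η • g ω)
    rw [sub_sub_cancel_left, inner_neg_right, real_inner_smul_right, norm_neg, norm_smul,
      mul_pow, Real.norm_eq_abs, sq_abs] at h
    linarith
  have hmajorant := hlinear.add (hsq.const_mul (η ^ 2 * L / 2))
  have hint : Integrable (fun ω ↦ f (x - η • g ω)) ℙ :=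
    integrable_of_le_of_le
      (hf.continuous.comp_aestronglyMeasurable
        (aestronglyMeasurable_const.sub (hg.1.const_smul η)))
      (Filter.Eventually.of_forall fun ω ↦ hfmin ⟨_, rfl⟩) (Filter.Eventually.of_forall hbound)
      (integrable_const fmin) hmajorant
  calc ∫ ω, f (x - η • g ω) ∂ℙ
      ≤ ∫ ω, (f x - η * ⟪gradient f x, g ω⟫ + η ^ 2 * L / 2 * ‖g ω‖ ^ 2) ∂ℙ :=
        integral_mono hint hmajorant hbound
    _ = f x - η * ⟪gradient f x, ∫ ω, g ω ∂ℙ⟫ + η ^ 2 * L / 2 * ∫ ω, ‖g ω‖ ^ 2 ∂ℙ := by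
        rw [integral_add hlinear (hsq.const_mul _),
          integral_sub (integrable_const _) ((hg1.const_inner _).const_mul η),
          integral_const_mul, integral_const_mul, integral_inner hg1]
        simp only [integral_const, probReal_univ, one_smul]

end Expectation

end InnerProductSpace

theorem one_step_biased_sgd_general
    {Ω : Type*} {m0 : MeasurableSpace Ω} (ℙ : Measure Ω) [IsProbabilityMeasure ℙ]
    {d : ℕ} (f : EuclideanSpace ℝ (Fin d) → ℝ) (L₂ μ fstar : ℝ)
    (hf : Differentiable ℝ f)
    (hlip : ∀ x y : EuclideanSpace ℝ (Fin d), ‖gradient f x - gradient f y‖ ≤ L₂ * ‖x - y‖)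
    (hglb : IsGLB (Set.range f) fstar)
    (hPL : ∀ x : EuclideanSpace ℝ (Fin d), 2 * μ * (f x - fstar) ≤ ‖gradient f x‖ ^ 2)
    (x : EuclideanSpace ℝ (Fin d)) (g : Ω → EuclideanSpace ℝ (Fin d))
    (b : EuclideanSpace ℝ (Fin d))
    (hg2 : MemLp g 2 ℙ)
    (hmean : ∫ ω, g ω ∂ℙ = gradient f x + b)
    (M σ2 m ζ2 : ℝ) (hM : 0 ≤ M) (hm1 : m < 1)
    (hvar : ∫ ω, ‖g ω - ∫ ω', g ω' ∂ℙ‖ ^ 2 ∂ℙ ≤ M * ‖gradient f x + b‖ ^ 2 + σ2)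
    (hbias : ‖b‖ ^ 2 ≤ m * ‖gradient f x‖ ^ 2 + ζ2)
    (η : ℝ) (hη0 : 0 < η) (hη : η ≤ 1 / ((M + 1) * L₂)) :
    (∫ ω, f (x - η • g ω) ∂ℙ) - fstar ≤
      (1 - η * μ * (1 - m)) * (f x - fstar) + η * ζ2 / 2 + η ^ 2 * L₂ * σ2 / 2 := by
  have hL₂ : 0 < L₂ :=
    pos_of_mul_pos_right (one_div_pos.mp (hη0.trans_le hη)) (by linarith)
  have hηL : η * ((M + 1) * L₂) ≤ 1 := (le_div_iff₀ (by positivity)).mp hη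
  set G := gradient f x
  have hsecond : ∫ ω, ‖g ω‖ ^ 2 ∂ℙ ≤ (M + 1) * ‖G + b‖ ^ 2 + σ2 := by
    rw [integral_norm_sub_integral_sq hg2, hmean] at hvar
    linarith
  have hdescent := integral_comp_sub_smul_le hf hlip ⟨fstar, hglb.1⟩ hg2 x η
  rw [hmean] at hdescent
  have hnoise : η ^ 2 * L₂ / 2 * ∫ ω, ‖g ω‖ ^ 2 ∂ℙ ≤
      η / 2 * ‖G + b‖ ^ 2 + η ^ 2 * L₂ * σ2 / 2 := by
    have := mul_le_mul_of_nonneg_left hηL (by positivity : 0 ≤ η / 2 * ‖G + b‖ ^ 2)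
    linarith [mul_le_mul_of_nonneg_left hsecond (by positivity : 0 ≤ η ^ 2 * L₂ / 2)]
  have hcross : -(η * ⟪G, G + b⟫) + η / 2 * ‖G + b‖ ^ 2 = η / 2 * (‖b‖ ^ 2 - ‖G‖ ^ 2) := by
    rw [inner_add_right, norm_add_sq_real, real_inner_self_eq_norm_sq]
    ring
  have hbias' := mul_le_mul_of_nonneg_left hbias (by positivity : 0 ≤ η / 2)
  have hPL' := mul_le_mul_of_nonneg_left (hPL x) (by nlinarith : 0 ≤ η * (1 - m) / 2)
  linarith

/-- One step of biased SGD for an `L₂`-smooth function satisfying the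
Polyak–Łojasiewicz condition, with a biased and noisy square-integrable gradient oracle. -/
theorem one_step_biased_sgd
    {Ω : Type*} {m0 : MeasurableSpace Ω} (ℙ : Measure Ω) [IsProbabilityMeasure ℙ]
    {d : ℕ} (f : EuclideanSpace ℝ (Fin d) → ℝ) (L₂ μ fstar : ℝ)
    (hf : Differentiable ℝ f)
    (hlip : ∀ x y : EuclideanSpace ℝ (Fin d), ‖gradient f x - gradient f y‖ ≤ L₂ * ‖x - y‖)
    (hglb : IsGLB (Set.range f) fstar)
    (hμ : 0 < μ)
    (hPL : ∀ x : EuclideanSpace ℝ (Fin d), 2 * μ * (f x - fstar) ≤ ‖gradient f x‖ ^ 2)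
    (x : EuclideanSpace ℝ (Fin d)) (g : Ω → EuclideanSpace ℝ (Fin d))
    (b : EuclideanSpace ℝ (Fin d))
    (hg2 : MemLp g 2 ℙ)
    (hmean : ∫ ω, g ω ∂ℙ = gradient f x + b)
    (M σ2 m ζ2 : ℝ) (hM : 0 ≤ M) (hσ2 : 0 ≤ σ2) (hm0 : 0 ≤ m) (hm1 : m < 1) (hζ2 : 0 ≤ ζ2)
    (hvar : ∫ ω, ‖g ω - ∫ ω', g ω' ∂ℙ‖ ^ 2 ∂ℙ ≤ M * ‖gradient f x + b‖ ^ 2 + σ2)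
    (hbias : ‖b‖ ^ 2 ≤ m * ‖gradient f x‖ ^ 2 + ζ2)
    (η : ℝ) (hη0 : 0 < η) (hη : η ≤ 1 / ((M + 1) * L₂)) :
    (∫ ω, f (x - η • g ω) ∂ℙ) - fstar ≤
      (1 - η * μ * (1 - m)) * (f x - fstar) + η * ζ2 / 2 + η ^ 2 * L₂ * σ2 / 2 :=
  one_step_biased_sgd_general (m0 := m0) ℙ f L₂ μ fstar hf hlip hglb hPL x g b hg2 hmean M σ2 m ζ2
    hM hm1 hvar hbias η hη0 hη
end

section
/- Let d ≥ 1, let e be a random vector uniformly distributed on the Euclidean unit sphere {y ∈ ℝ^d : ‖y‖₂ = 1}, let r be a random scalar uniformly distributed on [−1,1] independent of e, and let K : [−1,1] → ℝ be a measurable function with E[|K(r)|] < ∞ and E[r K(r)] = 1. Then for every vector s ∈ ℝ^d, E[d · r K(r) ⟨s, e⟩ e] = s. -/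
open MeasureTheory ProbabilityTheory
open scoped ENNReal RealInnerProductSpace

/-!
Independence factors the expectation as `d • E[r K(r)] • E[⟪s, e⟫ • e] = d • E[⟪s, e⟫ • e]`.
For an isometry-invariant law on the unit sphere, `E[⟪s, e⟫ ^ 2]` depends only on `‖s‖`, since
the reflection in `(s - t)ᗮ` exchanges vectors `s, t` of equal norm; summing over an orthonormal
basis scaled to norm `‖s‖` gives `d * E[⟪s, e⟫ ^ 2] = ‖s‖ ^ 2 * E[‖e‖ ^ 2] = ‖s‖ ^ 2`, and
polarization turns this into `E[⟪s, e⟫ ⟪t, e⟫] = d⁻¹ ⟪s, t⟫`, i.e. `E[⟪s, e⟫ • e] = d⁻¹ • s`.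
-/

section IsometryInvariant

variable {E : Type*} [NormedAddCommGroup E] [InnerProductSpace ℝ E]
  [MeasurableSpace E] [BorelSpace E] {μ : Measure E}

theorem integral_comp_linearIsometryEquiv_of_map_eq {F : Type*} [NormedAddCommGroup F]
    [NormedSpace ℝ F] (O : E ≃ₗᵢ[ℝ] E) (hO : μ.map O = μ) (f : E → F) :
    ∫ x, f (O x) ∂μ = ∫ x, f x ∂μ := by
  simpa [hO] using (O.toHomeomorph.measurableEmbedding.integral_map (μ := μ) f).symm

theorem integrable_inner_sq [IsFiniteMeasure μ] (h_norm : ∀ᵐ x ∂μ, ‖x‖ = 1) (s : E) :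
    Integrable (fun x => ⟪s, x⟫ ^ 2) μ := by
  refine .of_bound (by fun_prop) (‖s‖ ^ 2) ?_
  filter_upwards [h_norm] with x hx
  simpa [hx, sq_abs] using pow_le_pow_left₀ (abs_nonneg _) (abs_real_inner_le_norm s x) 2

theorem integral_inner_sq_eq_of_norm_eq (hμ : ∀ O : E ≃ₗᵢ[ℝ] E, μ.map O = μ) {s t : E}
    (hst : ‖s‖ = ‖t‖) : ∫ x, ⟪s, x⟫ ^ 2 ∂μ = ∫ x, ⟪t, x⟫ ^ 2 ∂μ := by
  set R := (ℝ ∙ (s - t))ᗮ.reflection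
  have hR : ∀ x, ⟪t, R x⟫ = ⟪s, x⟫ := fun x => by
    rw [← Submodule.reflection_sub hst, LinearIsometryEquiv.inner_map_map]
  simp_rw [← hR]
  exact integral_comp_linearIsometryEquiv_of_map_eq R (hμ R) fun x => ⟪t, x⟫ ^ 2

variable [FiniteDimensional ℝ E]

theorem integrable_inner_smul_self [IsFiniteMeasure μ] (h_norm : ∀ᵐ x ∂μ, ‖x‖ = 1) (s : E) :
    Integrable (fun x => ⟪s, x⟫ • x) μ := by
  refine .of_bound (by fun_prop) ‖s‖ ?_
  filter_upwards [h_norm] with x hx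
  simpa [norm_smul, hx] using abs_real_inner_le_norm s x

variable [IsProbabilityMeasure μ]

theorem finrank_mul_integral_inner_sq (hμ : ∀ O : E ≃ₗᵢ[ℝ] E, μ.map O = μ)
    (h_norm : ∀ᵐ x ∂μ, ‖x‖ = 1) (s : E) :
    (Module.finrank ℝ E : ℝ) * ∫ x, ⟪s, x⟫ ^ 2 ∂μ = ‖s‖ ^ 2 := by
  set b := stdOrthonormalBasis ℝ E
  have hb : ∀ i, ∫ x, ⟪‖s‖ • b i, x⟫ ^ 2 ∂μ = ∫ x, ⟪s, x⟫ ^ 2 ∂μ := fun i =>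
    integral_inner_sq_eq_of_norm_eq hμ (by simp [norm_smul, b.orthonormal.1 i])
  calc (Module.finrank ℝ E : ℝ) * ∫ x, ⟪s, x⟫ ^ 2 ∂μ
      = ∑ i, ∫ x, ⟪‖s‖ • b i, x⟫ ^ 2 ∂μ := by simp [hb]
    _ = ‖s‖ ^ 2 * ∫ x, ∑ i, ⟪b i, x⟫ ^ 2 ∂μ := by
      rw [integral_finsetSum _ fun i _ => integrable_inner_sq h_norm (b i), Finset.mul_sum]
      simp_rw [inner_smul_left, mul_pow, integral_const_mul]
      simp
    _ = ‖s‖ ^ 2 := by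
      simp_rw [b.sum_sq_inner_right]
      rw [integral_congr_ae (g := fun _ => (1 : ℝ)) (h_norm.mono fun x hx => by simp [hx])]
      simp

theorem integral_inner_sq (hμ : ∀ O : E ≃ₗᵢ[ℝ] E, μ.map O = μ) (h_norm : ∀ᵐ x ∂μ, ‖x‖ = 1)
    (s : E) : ∫ x, ⟪s, x⟫ ^ 2 ∂μ = (Module.finrank ℝ E : ℝ)⁻¹ * ‖s‖ ^ 2 := by
  obtain ⟨x, hx⟩ := h_norm.exists
  have : Nontrivial E := ⟨⟨x, 0, by simp [← norm_ne_zero_iff, hx]⟩⟩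
  rw [← finrank_mul_integral_inner_sq hμ h_norm s, inv_mul_cancel_left₀]
  exact_mod_cast Module.finrank_pos.ne'

theorem integral_inner_mul_inner (hμ : ∀ O : E ≃ₗᵢ[ℝ] E, μ.map O = μ)
    (h_norm : ∀ᵐ x ∂μ, ‖x‖ = 1) (s t : E) :
    ∫ x, ⟪s, x⟫ * ⟪t, x⟫ ∂μ = (Module.finrank ℝ E : ℝ)⁻¹ * ⟪s, t⟫ := by
  have hpol : ∀ x, ⟪s, x⟫ * ⟪t, x⟫ = (⟪s + t, x⟫ ^ 2 - ⟪s - t, x⟫ ^ 2) / 4 := fun x => by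
    rw [inner_add_left, inner_sub_left]; ring
  simp_rw [hpol]
  rw [integral_div, integral_sub (integrable_inner_sq h_norm _) (integrable_inner_sq h_norm _),
    integral_inner_sq hμ h_norm, integral_inner_sq hμ h_norm, norm_add_sq_real, norm_sub_sq_real]
  ring

theorem integral_inner_smul_self (hμ : ∀ O : E ≃ₗᵢ[ℝ] E, μ.map O = μ)
    (h_norm : ∀ᵐ x ∂μ, ‖x‖ = 1) (s : E) :
    ∫ x, ⟪s, x⟫ • x ∂μ = (Module.finrank ℝ E : ℝ)⁻¹ • s := by
  refine ext_inner_left ℝ fun t => ?_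
  rw [← integral_inner (integrable_inner_smul_self h_norm s), inner_smul_right]
  simp_rw [inner_smul_right]
  rw [integral_inner_mul_inner hμ h_norm, real_inner_comm]

end IsometryInvariant

theorem kernel_estimator_unbiased_linear_general
    {Ω : Type*} {m0 : MeasurableSpace Ω} (P : Measure Ω) [IsProbabilityMeasure P]
    {d : ℕ} (hd : 1 ≤ d)
    (e : Ω → EuclideanSpace ℝ (Fin d)) (r : Ω → ℝ) (K : ℝ → ℝ)
    (he_meas : Measurable e) (he_norm : ∀ ω, ‖e ω‖ = 1)
    (he_unif : ∀ O : EuclideanSpace ℝ (Fin d) ≃ₗᵢ[ℝ] EuclideanSpace ℝ (Fin d),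
      Measure.map (fun ω => O (e ω)) P = Measure.map e P)
    (hindep : IndepFun e r P)
    (hK_meas : Measurable K)
    (hK1 : ∫ ω, r ω * K (r ω) ∂P = 1)
    (s : EuclideanSpace ℝ (Fin d)) :
    ∫ ω, ((d : ℝ) * (r ω * K (r ω)) * ⟪s, e ω⟫) • e ω ∂P = s := by
  have : IsProbabilityMeasure (P.map e) := Measure.isProbabilityMeasure_map he_meas.aemeasurable
  have hμ : ∀ O : EuclideanSpace ℝ (Fin d) ≃ₗᵢ[ℝ] EuclideanSpace ℝ (Fin d),
      (P.map e).map O = P.map e := fun O => by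
    rw [Measure.map_map O.continuous.measurable he_meas]
    exact he_unif O
  have h_norm : ∀ᵐ x ∂P.map e, ‖x‖ = 1 :=
    (ae_map_iff he_meas.aemeasurable (measurableSet_eq_fun (by fun_prop) (by fun_prop))).mpr
      (.of_forall he_norm)
  have h_moment : ∫ ω, ⟪s, e ω⟫ • e ω ∂P = (d : ℝ)⁻¹ • s := by
    rw [← integral_map (f := fun x => ⟪s, x⟫ • x) he_meas.aemeasurable (by fun_prop),
      integral_inner_smul_self hμ h_norm, finrank_euclideanSpace_fin]
  have h_indep : IndepFun (fun ω => (d : ℝ) * (r ω * K (r ω))) (fun ω => ⟪s, e ω⟫ • e ω) P :=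
    hindep.symm.comp (φ := fun x => (d : ℝ) * (x * K x)) (ψ := fun x => ⟪s, x⟫ • x)
      (by fun_prop) (by fun_prop)
  have hrK : Integrable (fun ω => r ω * K (r ω)) P := .of_integral_ne_zero (by simp [hK1])
  calc ∫ ω, ((d : ℝ) * (r ω * K (r ω)) * ⟪s, e ω⟫) • e ω ∂P
      = ∫ ω, ((d : ℝ) * (r ω * K (r ω))) • (⟪s, e ω⟫ • e ω) ∂P := by simp_rw [mul_smul]
    _ = s := by
      rw [h_indep.integral_fun_smul_eq_smul_integral (hrK.const_mul _).aestronglyMeasurable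
        (by fun_prop), integral_const_mul, hK1, h_moment, smul_smul, mul_one,
        mul_inv_cancel₀ (Nat.cast_pos.mpr hd).ne', one_smul]

/-- The unbiasedness identity for the kernel-based estimator: if `e` is uniform
on the Euclidean unit sphere, `r` is uniform on `[-1,1]` independent of `e`, and the kernel `K`
satisfies `E[|K(r)|] < ∞` and `E[r K(r)] = 1`, then `E[d · r K(r) ⟨s, e⟩ e] = s`. -/
theorem kernel_estimator_unbiased_linear
    {Ω : Type*} {m0 : MeasurableSpace Ω} (P : Measure Ω) [IsProbabilityMeasure P]
    {d : ℕ} (hd : 1 ≤ d)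
    (e : Ω → EuclideanSpace ℝ (Fin d)) (r : Ω → ℝ) (K : ℝ → ℝ)
    (he_meas : Measurable e) (he_norm : ∀ ω, ‖e ω‖ = 1)
    (he_unif : ∀ O : EuclideanSpace ℝ (Fin d) ≃ₗᵢ[ℝ] EuclideanSpace ℝ (Fin d),
      Measure.map (fun ω => O (e ω)) P = Measure.map e P)
    (hr_meas : Measurable r)
    (hr_unif : Measure.map r P = (2⁻¹ : ℝ≥0∞) • volume.restrict (Set.Icc (-1 : ℝ) 1))
    (hindep : IndepFun e r P)
    (hK_meas : Measurable K)
    (hK_int : Integrable (fun ω => |K (r ω)|) P)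
    (hK1 : ∫ ω, r ω * K (r ω) ∂P = 1)
    (s : EuclideanSpace ℝ (Fin d)) :
    ∫ ω, ((d : ℝ) * (r ω * K (r ω)) * ⟪s, e ω⟫) • e ω ∂P = s :=
  kernel_estimator_unbiased_linear_general (m0 := m0) P hd e r K he_meas he_norm he_unif hindep
    hK_meas hK1 s
end

section
/- Let f : ℝ^d → ℝ be differentiable with L₂-Lipschitz gradient, let γ > 0, and let e be a random vector uniformly distributed on the Euclidean unit sphere in ℝ^d. Then for every x ∈ ℝ^d and every r ∈ [−1,1]: (d²/(2γ²)) · E_e[(f(x + γ r e) − f(x − γ r e))²] ≤ 6 d ‖∇f(x)‖₂² + (3/4) d² L₂² γ². -/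
/-! The descent lemma, applied at `x + h` and `x - h`, gives
`|f (x + h) - f (x - h) - 2 ⟪∇f x, h⟫| ≤ L ‖h‖²`, hence by Young's inequality
`(f (x + h) - f (x - h))² ≤ 12 ⟪∇f x, h⟫² + (3/2) L² ‖h‖⁴`. Take `h = γ r e`, use `r² ≤ 1` and
integrate with `E ⟪s, e⟫² = ‖s‖² / d`. That identity holds because the reflection in
`(u - v)ᗮ` swaps two vectors of equal norm, so `E ⟪u, e⟫²` depends only on `‖u‖`, while the
second moments along an orthonormal basis add up to `E ‖e‖² = 1`. -/

open MeasureTheory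
open scoped RealInnerProductSpace

section LipschitzGradient

variable {F : Type*} [NormedAddCommGroup F] [InnerProductSpace ℝ F] [CompleteSpace F]
  {f : F → ℝ} {L : ℝ}

theorem abs_sub_sub_inner_gradient_le (hf : Differentiable ℝ f)
    (hlip : ∀ x y, ‖gradient f x - gradient f y‖ ≤ L * ‖x - y‖) (x h : F) :
    |f (x + h) - f x - ⟪gradient f x, h⟫| ≤ L / 2 * ‖h‖ ^ 2 := by
  set φ : ℝ → ℝ := fun t => f (x + t • h) - f x - t * ⟪gradient f x, h⟫
  have hφ : ∀ t, HasDerivAt φ ⟪gradient f (x + t • h) - gradient f x, h⟫ t := by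
    intro t
    have hline : HasDerivAt (fun t : ℝ => x + t • h) h t := by
      simpa using ((hasDerivAt_id t).smul_const h).const_add x
    have := (((hf (x + t • h)).hasGradientAt.hasFDerivAt.comp_hasDerivAt t hline).sub_const
      (f x)).sub (hasDerivAt_mul_const ⟪gradient f x, h⟫)
    exact this.congr_deriv (by simp [inner_sub_left])
  have hbound : ∀ t ∈ Set.Ico (0 : ℝ) 1,
      ‖⟪gradient f (x + t • h) - gradient f x, h⟫‖ ≤ L * ‖h‖ ^ 2 * t := by
    intro t ht
    calc ‖⟪gradient f (x + t • h) - gradient f x, h⟫‖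
        ≤ ‖gradient f (x + t • h) - gradient f x‖ * ‖h‖ := norm_inner_le_norm _ _
      _ ≤ L * ‖t • h‖ * ‖h‖ := by
        gcongr
        exact (hlip _ _).trans_eq (by rw [add_sub_cancel_left])
      _ = L * ‖h‖ ^ 2 * t := by rw [norm_smul, Real.norm_of_nonneg ht.1]; ring
  have hB : ∀ t : ℝ, HasDerivAt (fun t => L / 2 * ‖h‖ ^ 2 * t ^ 2) (L * ‖h‖ ^ 2 * t) t :=
    fun t => ((hasDerivAt_pow 2 t).const_mul (L / 2 * ‖h‖ ^ 2)).congr_deriv (by push_cast; ring)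
  simpa [φ] using image_norm_le_of_norm_deriv_right_le_deriv_boundary
    (fun t _ => (hφ t).continuousAt.continuousWithinAt) (fun t _ => (hφ t).hasDerivWithinAt)
    (by simp [φ]) hB hbound (Set.right_mem_Icc.2 zero_le_one)

theorem abs_sub_sub_two_inner_gradient_le (hf : Differentiable ℝ f)
    (hlip : ∀ x y, ‖gradient f x - gradient f y‖ ≤ L * ‖x - y‖) (x h : F) :
    |f (x + h) - f (x - h) - 2 * ⟪gradient f x, h⟫| ≤ L * ‖h‖ ^ 2 := by
  have hplus := abs_sub_sub_inner_gradient_le hf hlip x h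
  have hminus := abs_sub_sub_inner_gradient_le hf hlip x (-h)
  rw [← sub_eq_add_neg, inner_neg_right, norm_neg, sub_neg_eq_add] at hminus
  calc |f (x + h) - f (x - h) - 2 * ⟪gradient f x, h⟫|
      = |(f (x + h) - f x - ⟪gradient f x, h⟫) - (f (x - h) - f x + ⟪gradient f x, h⟫)| := by
        congr 1; ring
    _ ≤ L / 2 * ‖h‖ ^ 2 + L / 2 * ‖h‖ ^ 2 := (abs_sub _ _).trans (add_le_add hplus hminus)
    _ = L * ‖h‖ ^ 2 := by ring

theorem sq_sub_le_of_lipschitz_gradient (hf : Differentiable ℝ f)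
    (hlip : ∀ x y, ‖gradient f x - gradient f y‖ ≤ L * ‖x - y‖) (x h : F) :
    (f (x + h) - f (x - h)) ^ 2 ≤ 12 * ⟪gradient f x, h⟫ ^ 2 + 3 / 2 * L ^ 2 * ‖h‖ ^ 4 := by
  set a := 2 * ⟪gradient f x, h⟫
  set b := f (x + h) - f (x - h) - a
  have hb : b ^ 2 ≤ (L * ‖h‖ ^ 2) ^ 2 := by
    rw [← sq_abs b]
    exact pow_le_pow_left₀ (abs_nonneg b) (abs_sub_sub_two_inner_gradient_le hf hlip x h) 2
  have young : (a + b) ^ 2 ≤ 3 * a ^ 2 + 3 / 2 * b ^ 2 := by nlinarith [sq_nonneg (2 * a - b)]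
  calc (f (x + h) - f (x - h)) ^ 2 = (a + b) ^ 2 := by ring
    _ ≤ 3 * a ^ 2 + 3 / 2 * (L * ‖h‖ ^ 2) ^ 2 := by linarith
    _ = 12 * ⟪gradient f x, h⟫ ^ 2 + 3 / 2 * L ^ 2 * ‖h‖ ^ 4 := by ring

theorem sq_sub_smul_le_of_lipschitz_gradient (hf : Differentiable ℝ f)
    (hlip : ∀ x y, ‖gradient f x - gradient f y‖ ≤ L * ‖x - y‖) (x u : F) (hu : ‖u‖ = 1)
    (γ : ℝ) {r : ℝ} (hr : r ^ 2 ≤ 1) :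
    (f (x + (γ * r) • u) - f (x - (γ * r) • u)) ^ 2 ≤
      12 * γ ^ 2 * ⟪gradient f x, u⟫ ^ 2 + 3 / 2 * L ^ 2 * γ ^ 4 := by
  have hnorm : ‖(γ * r) • u‖ ^ 4 = ((γ * r) ^ 2) ^ 2 := by
    rw [norm_smul, hu, mul_one, Real.norm_eq_abs, ← sq_abs (γ * r)]; ring
  calc _ ≤ 12 * ⟪gradient f x, (γ * r) • u⟫ ^ 2 + 3 / 2 * L ^ 2 * ‖(γ * r) • u‖ ^ 4 :=
        sq_sub_le_of_lipschitz_gradient hf hlip x _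
    _ = r ^ 2 * (12 * γ ^ 2 * ⟪gradient f x, u⟫ ^ 2) + (r ^ 2) ^ 2 * (3 / 2 * L ^ 2 * γ ^ 4) := by
        rw [real_inner_smul_right, hnorm]; ring
    _ ≤ 12 * γ ^ 2 * ⟪gradient f x, u⟫ ^ 2 + 3 / 2 * L ^ 2 * γ ^ 4 :=
        add_le_add (mul_le_of_le_one_left (by positivity) hr)
          (mul_le_of_le_one_left (by positivity) (pow_le_one₀ (sq_nonneg r) hr))

end LipschitzGradient

section RotationInvariant

variable {Ω F : Type*} {m0 : MeasurableSpace Ω} {P : Measure Ω}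
  [NormedAddCommGroup F] [InnerProductSpace ℝ F] [MeasurableSpace F] [BorelSpace F] {e : Ω → F}

theorem integrable_inner_sq_s4 [IsFiniteMeasure P] (he_meas : AEMeasurable e P)
    (he_norm : ∀ ω, ‖e ω‖ = 1) (s : F) : Integrable (fun ω => ⟪s, e ω⟫ ^ 2) P := by
  refine .of_bound
    (((innerSL ℝ s).continuous.pow 2).measurable.comp_aemeasurable he_meas).aestronglyMeasurable
    (‖s‖ ^ 2) (.of_forall fun ω => ?_)
  rw [Real.norm_eq_abs, abs_pow, ← mul_one ‖s‖, ← he_norm ω]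
  exact pow_le_pow_left₀ (abs_nonneg _) (abs_real_inner_le_norm _ _) 2

theorem integral_inner_sq_eq_of_norm_eq_s4 (he_meas : AEMeasurable e P)
    (he_unif : ∀ O : F ≃ₗᵢ[ℝ] F, P.map (fun ω => O (e ω)) = P.map e)
    {u v : F} (huv : ‖u‖ = ‖v‖) : ∫ ω, ⟪u, e ω⟫ ^ 2 ∂P = ∫ ω, ⟪v, e ω⟫ ^ 2 ∂P := by
  set R := (ℝ ∙ (u - v))ᗮ.reflection
  have hRu : R u = v := Submodule.reflection_sub huv
  have hφ : Continuous fun y : F => ⟪v, y⟫ ^ 2 := (innerSL ℝ v).continuous.pow 2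
  calc ∫ ω, ⟪u, e ω⟫ ^ 2 ∂P = ∫ ω, ⟪v, R (e ω)⟫ ^ 2 ∂P := by
        simp_rw [← hRu, LinearIsometryEquiv.inner_map_map]
    _ = ∫ y, ⟪v, y⟫ ^ 2 ∂(P.map (fun ω => R (e ω))) :=
        (integral_map (R.continuous.measurable.comp_aemeasurable he_meas)
          hφ.aestronglyMeasurable).symm
    _ = ∫ ω, ⟪v, e ω⟫ ^ 2 ∂P := by
        rw [he_unif R, integral_map he_meas hφ.aestronglyMeasurable]

theorem integral_inner_sq_eq_norm_sq_div_finrank [IsProbabilityMeasure P] [FiniteDimensional ℝ F]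
    (he_meas : AEMeasurable e P) (he_norm : ∀ ω, ‖e ω‖ = 1)
    (he_unif : ∀ O : F ≃ₗᵢ[ℝ] F, P.map (fun ω => O (e ω)) = P.map e) (s : F) :
    ∫ ω, ⟪s, e ω⟫ ^ 2 ∂P = ‖s‖ ^ 2 / Module.finrank ℝ F := by
  obtain ⟨ω₀⟩ := nonempty_of_isProbabilityMeasure P
  have : Nontrivial F := nontrivial_of_ne (e ω₀) 0 (by simp [← norm_ne_zero_iff, he_norm])
  have hd : (Module.finrank ℝ F : ℝ) ≠ 0 := by exact_mod_cast Module.finrank_pos.ne'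
  set b := stdOrthonormalBasis ℝ F
  have hsum : ∑ i, ∫ ω, ⟪b i, e ω⟫ ^ 2 ∂P = 1 := by
    rw [← integral_finsetSum _ fun i _ => integrable_inner_sq_s4 he_meas he_norm (b i)]
    simp [b.sum_sq_inner_right, he_norm]
  have hb : ∀ i, ∫ ω, ⟪s, e ω⟫ ^ 2 ∂P = ‖s‖ ^ 2 * ∫ ω, ⟪b i, e ω⟫ ^ 2 ∂P := by
    intro i
    rw [integral_inner_sq_eq_of_norm_eq_s4 he_meas he_unif (v := ‖s‖ • b i)
      (by simp [norm_smul, b.orthonormal.1 i])]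
    simp_rw [real_inner_smul_left, mul_pow, integral_const_mul]
  rw [eq_div_iff hd]
  calc (∫ ω, ⟪s, e ω⟫ ^ 2 ∂P) * Module.finrank ℝ F = ∑ i, ∫ ω, ⟪s, e ω⟫ ^ 2 ∂P := by
        simp [mul_comm]
    _ = ∑ i, ‖s‖ ^ 2 * ∫ ω, ⟪b i, e ω⟫ ^ 2 ∂P := Finset.sum_congr rfl fun i _ => hb i
    _ = ‖s‖ ^ 2 := by rw [← Finset.mul_sum, hsum, mul_one]

theorem integral_sq_sub_smul_le_of_lipschitz_gradient [IsProbabilityMeasure P]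
    [FiniteDimensional ℝ F] [CompleteSpace F] {f : F → ℝ} {L : ℝ} (hf : Differentiable ℝ f)
    (hlip : ∀ x y, ‖gradient f x - gradient f y‖ ≤ L * ‖x - y‖)
    (he_meas : AEMeasurable e P) (he_norm : ∀ ω, ‖e ω‖ = 1)
    (he_unif : ∀ O : F ≃ₗᵢ[ℝ] F, P.map (fun ω => O (e ω)) = P.map e)
    (x : F) (γ : ℝ) {r : ℝ} (hr : r ^ 2 ≤ 1) :
    ∫ ω, (f (x + (γ * r) • e ω) - f (x - (γ * r) • e ω)) ^ 2 ∂P ≤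
      12 * γ ^ 2 * (‖gradient f x‖ ^ 2 / Module.finrank ℝ F) + 3 / 2 * L ^ 2 * γ ^ 4 := by
  have hinner := integrable_inner_sq_s4 he_meas he_norm (gradient f x)
  calc _ ≤ ∫ ω, (12 * γ ^ 2 * ⟪gradient f x, e ω⟫ ^ 2 + 3 / 2 * L ^ 2 * γ ^ 4) ∂P :=
        integral_mono_of_nonneg (.of_forall fun ω => sq_nonneg _)
          ((hinner.const_mul _).add (integrable_const _))
          (.of_forall fun ω =>
            sq_sub_smul_le_of_lipschitz_gradient hf hlip x (e ω) (he_norm ω) γ hr)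
    _ = _ := by
        rw [integral_add (hinner.const_mul _) (integrable_const _), integral_const_mul,
          integral_inner_sq_eq_norm_sq_div_finrank he_meas he_norm he_unif]
        simp

end RotationInvariant

/-- For an `L₂`-smooth function `f`, a smoothing parameter `γ > 0`, a vector `e`
uniform on the Euclidean unit sphere, every point `x` and every `r ∈ [−1,1]`:
`(d²/(2γ²)) E_e[(f(x+γre) − f(x−γre))²] ≤ 6d‖∇f(x)‖² + (3/4)d²L₂²γ²`. -/
theorem central_difference_second_moment_bound
    {Ω : Type*} {m0 : MeasurableSpace Ω} (P : Measure Ω) [IsProbabilityMeasure P]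
    {d : ℕ} (f : EuclideanSpace ℝ (Fin d) → ℝ) (L₂ : ℝ)
    (hf : Differentiable ℝ f)
    (hlip : ∀ x y : EuclideanSpace ℝ (Fin d), ‖gradient f x - gradient f y‖ ≤ L₂ * ‖x - y‖)
    (γ : ℝ) (hγ : 0 < γ)
    (e : Ω → EuclideanSpace ℝ (Fin d))
    (he_meas : Measurable e) (he_norm : ∀ ω, ‖e ω‖ = 1)
    (he_unif : ∀ O : EuclideanSpace ℝ (Fin d) ≃ₗᵢ[ℝ] EuclideanSpace ℝ (Fin d),
      Measure.map (fun ω => O (e ω)) P = Measure.map e P)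
    (x : EuclideanSpace ℝ (Fin d)) (r : ℝ) (hr : r ∈ Set.Icc (-1 : ℝ) 1) :
    (d : ℝ) ^ 2 / (2 * γ ^ 2) *
        ∫ ω, (f (x + (γ * r) • e ω) - f (x - (γ * r) • e ω)) ^ 2 ∂P
      ≤ 6 * d * ‖gradient f x‖ ^ 2 + 3 / 4 * (d : ℝ) ^ 2 * L₂ ^ 2 * γ ^ 2 := by
  have hr2 : r ^ 2 ≤ 1 := by nlinarith [hr.1, hr.2]
  have hintegral := integral_sq_sub_smul_le_of_lipschitz_gradient hf hlip
    (he_meas.aemeasurable (μ := P)) he_norm he_unif x γ hr2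
  rw [finrank_euclideanSpace_fin] at hintegral
  calc _ ≤ (d : ℝ) ^ 2 / (2 * γ ^ 2) *
        (12 * γ ^ 2 * (‖gradient f x‖ ^ 2 / d) + 3 / 2 * L₂ ^ 2 * γ ^ 4) := by
        gcongr
    _ = _ := by
        rcases eq_or_ne (d : ℝ) 0 with hd | hd
        · simp [hd]
        · field_simp
          ring
end

section
/- Let β ≥ 2 with l the largest integer strictly less than β, and let f : ℝ^d → ℝ belong to the Hölder class F_β(L_β). Let ξ₁, ξ₂ be integrable real random variables independent of the pair (e, r), and define the one-point kernel-based gradient approximation g̃(x, ξ, e, r) := d (f(x + γ r e) + ξ₁ − f(x − γ r e) − ξ₂) K(r) e/(2γ). Then for every x ∈ ℝ^d, ‖E[g̃(x, ξ, e, r)] − ∇f(x)‖₂ ≤ κ_β d L_β γ^{β−1}. -/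
/-!
Split the estimator into a noise part and the central difference `f(x + γre) - f(x - γre)`.
The noise part has mean zero: the noise is independent of `(e, r)`, and
`E[K(r) e] = E[K(r)] E[e] = 0`.
Expanding the central difference to order `l` at `x`, the even Taylor terms cancel, and by
independence of `e` and `r` the odd term of order `j` has mean proportional to
`E[r^j K(r)] · E[D^j f(x)[e,…,e] e]`, which vanishes for `3 ≤ j ≤ l`. The linear term gives
`∇f(x)` because a rotation-invariant unit vector has `E[e eᵀ] = I/d`. What is left is the
Hölder remainder, at most `L_β |γr|^β` on each side.
-/

open MeasureTheory ProbabilityTheory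
open scoped ENNReal RealInnerProductSpace

section SphereMoments

variable {ι : Type*} [Fintype ι] {μ : Measure (EuclideanSpace ℝ ι)}

lemma integral_coord_mul_coord_of_ne
    (hμ : ∀ O : EuclideanSpace ℝ ι ≃ₗᵢ[ℝ] EuclideanSpace ℝ ι, μ.map O = μ)
    {i j : ι} (hij : i ≠ j) : ∫ y, y i * y j ∂μ = 0 := by
  classical
  let O := LinearIsometryEquiv.piLpCongrRight 2
    fun k : ι => if k = i then LinearIsometryEquiv.neg ℝ else LinearIsometryEquiv.refl ℝ ℝ
  have hflip : ∀ y : EuclideanSpace ℝ ι, O y i * O y j = -(y i * y j) := fun y => by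
    simp [O, hij.symm]
  have h := MeasurePreserving.integral_comp ⟨O.continuous.measurable, hμ O⟩
    O.toHomeomorph.measurableEmbedding fun y => y i * y j
  simp only [hflip, integral_neg] at h
  linarith

variable [IsProbabilityMeasure μ]

lemma integrable_coord_mul_coord (h1 : ∀ᵐ y ∂μ, ‖y‖ = 1) (i j : ι) :
    Integrable (fun y : EuclideanSpace ℝ ι => y i * y j) μ := by
  refine (integrable_const (1 : ℝ)).mono' (by fun_prop) ?_
  filter_upwards [h1] with y hy
  rw [norm_mul]
  exact mul_le_one₀ (hy ▸ PiLp.norm_apply_le y i) (norm_nonneg _) (hy ▸ PiLp.norm_apply_le y j)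

lemma integral_coord_mul_self (h1 : ∀ᵐ y ∂μ, ‖y‖ = 1)
    (hμ : ∀ O : EuclideanSpace ℝ ι ≃ₗᵢ[ℝ] EuclideanSpace ℝ ι, μ.map O = μ) (i : ι) :
    ∫ y, y i * y i ∂μ = (Fintype.card ι : ℝ)⁻¹ := by
  classical
  have hswap : ∀ k, ∫ y, y k * y k ∂μ = ∫ y, y i * y i ∂μ := fun k => by
    let O := LinearIsometryEquiv.piLpCongrLeft 2 ℝ ℝ (Equiv.swap i k)
    have h := MeasurePreserving.integral_comp ⟨O.continuous.measurable, hμ O⟩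
      O.toHomeomorph.measurableEmbedding fun y => y i * y i
    simpa [O, Equiv.piCongrLeft'] using h
  have hsum : ∑ k, ∫ y, y k * y k ∂μ = 1 := by
    rw [← integral_finsetSum _ fun k _ => integrable_coord_mul_coord h1 k k]
    rw [integral_congr_ae (g := fun _ => (1 : ℝ)) ?_, integral_const, probReal_univ, one_smul]
    filter_upwards [h1] with y hy
    simp [← sq, ← EuclideanSpace.real_norm_sq_eq, hy]
  simp only [hswap, Finset.sum_const, Finset.card_univ, nsmul_eq_mul] at hsum
  exact eq_inv_of_mul_eq_one_right hsum

theorem integral_inner_smul_self_of_isometry_invariant (h1 : ∀ᵐ y ∂μ, ‖y‖ = 1)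
    (hμ : ∀ O : EuclideanSpace ℝ ι ≃ₗᵢ[ℝ] EuclideanSpace ℝ ι, μ.map O = μ)
    (v : EuclideanSpace ℝ ι) :
    ∫ y, ⟪v, y⟫ • y ∂μ = (Fintype.card ι : ℝ)⁻¹ • v := by
  have hint : Integrable (fun y : EuclideanSpace ℝ ι => ⟪v, y⟫ • y) μ := by
    refine (integrable_const ‖v‖).mono' (by fun_prop) ?_
    filter_upwards [h1] with y hy
    calc ‖⟪v, y⟫ • y‖ ≤ ‖v‖ * ‖y‖ * ‖y‖ := by
          rw [norm_smul]; gcongr; exact norm_inner_le_norm v y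
      _ = ‖v‖ := by rw [hy, mul_one, mul_one]
  ext i
  calc (∫ y, ⟪v, y⟫ • y ∂μ) i = ∫ y, (⟪v, y⟫ • y) i ∂μ :=
        ((EuclideanSpace.proj i).integral_comp_comm hint).symm
    _ = ∫ y, ∑ k, v k * (y k * y i) ∂μ := by
        congr 1; ext y
        simp only [PiLp.smul_apply, smul_eq_mul, PiLp.inner_apply, RCLike.inner_apply, conj_trivial,
          Finset.sum_mul]
        exact Finset.sum_congr rfl fun k _ => by ring
    _ = ∑ k, v k * ∫ y, y k * y i ∂μ := by
        rw [integral_finsetSum _ fun k _ => (integrable_coord_mul_coord h1 k i).const_mul _]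
        simp only [integral_const_mul]
    _ = ((Fintype.card ι : ℝ)⁻¹ • v) i := by
        rw [Finset.sum_eq_single i (fun k _ hki => by rw [integral_coord_mul_coord_of_ne hμ hki,
          mul_zero]) (by simp), integral_coord_mul_self h1 hμ]
        simp [mul_comm]

end SphereMoments

section Taylor

variable {E : Type*} [NormedAddCommGroup E] [NormedSpace ℝ E]

noncomputable def taylorPoly (f : E → ℝ) (x : E) (l : ℕ) (v : E) : ℝ :=
  ∑ j ∈ Finset.range (l + 1), (j.factorial : ℝ)⁻¹ * iteratedFDeriv ℝ j f x (fun _ => v)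

lemma taylorPoly_smul_sub_taylorPoly_neg_smul (f : E → ℝ) (x : E) (l : ℕ) (t s : ℝ) (v : E) :
    taylorPoly f x l ((t * s) • v) - taylorPoly f x l ((-(t * s)) • v)
      = ∑ j ∈ Finset.range (l + 1), ((j.factorial : ℝ)⁻¹ * t ^ j) *
          ((s ^ j - (-s) ^ j) * iteratedFDeriv ℝ j f x (fun _ => v)) := by
  have hsmul : ∀ (j : ℕ) (a : ℝ),
      iteratedFDeriv ℝ j f x (fun _ => a • v) = a ^ j * iteratedFDeriv ℝ j f x (fun _ => v) :=
    fun j a => by simpa using (iteratedFDeriv ℝ j f x).map_smul_univ (fun _ => a) (fun _ => v)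
  simp only [taylorPoly, ← Finset.sum_sub_distrib, hsmul]
  exact Finset.sum_congr rfl fun j _ => by ring

lemma abs_sub_taylorPoly_le {f : E → ℝ} {l : ℕ} {β L : ℝ}
    (hHolder : ∀ x z : E, |f z - ∑ j ∈ Finset.range (l + 1),
      ((j.factorial : ℝ)⁻¹) * iteratedFDeriv ℝ j f x (fun _ => z - x)| ≤ L * ‖z - x‖ ^ β)
    (x v : E) : |f (x + v) - taylorPoly f x l v| ≤ L * ‖v‖ ^ β := by
  simpa only [taylorPoly, add_sub_cancel_left] using hHolder x (x + v)

lemma taylorPoly_central_difference_smul_eq_sum (f : E → ℝ) (x : E) (l : ℕ) (γ s k : ℝ) (v : E) :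
    ((taylorPoly f x l ((γ * s) • v) - taylorPoly f x l ((-(γ * s)) • v)) * k) • v
      = ∑ j ∈ Finset.range (l + 1), ((j.factorial : ℝ)⁻¹ * γ ^ j) •
          (((s ^ j - (-s) ^ j) * k) • (iteratedFDeriv ℝ j f x (fun _ => v) • v)) := by
  rw [taylorPoly_smul_sub_taylorPoly_neg_smul, Finset.sum_mul, Finset.sum_smul]
  exact Finset.sum_congr rfl fun j _ => by simp only [smul_smul]; congr 1; ring

end Taylor

lemma iteratedFDeriv_one_apply_const_eq_inner_gradient {F : Type*} [NormedAddCommGroup F]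
    [InnerProductSpace ℝ F] [CompleteSpace F] (f : F → ℝ) (x v : F) :
    iteratedFDeriv ℝ 1 f x (fun _ => v) = ⟪gradient f x, v⟫ := by
  rw [iteratedFDeriv_one_apply, ← toDual_gradient, InnerProductSpace.toDual_apply_apply]

lemma integral_pow_sub_neg_pow_mul_kernel {Ω : Type*} [MeasurableSpace Ω] {P : Measure Ω}
    {r : Ω → ℝ} {K : ℝ → ℝ} {l : ℕ} (hK1 : ∫ ω, r ω * K (r ω) ∂P = 1)
    (hKj : ∀ j : ℕ, 2 ≤ j → j ≤ l → ∫ ω, r ω ^ j * K (r ω) ∂P = 0) {j : ℕ} (hj : j ≤ l) :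
    ∫ ω, (r ω ^ j - (-r ω) ^ j) * K (r ω) ∂P = if j = 1 then 2 else 0 := by
  rcases Nat.even_or_odd j with hj_even | hj_odd
  · have hj1 : j ≠ 1 := by rintro rfl; exact Nat.not_even_one hj_even
    simp [hj_even.neg_pow, hj1]
  · simp_rw [hj_odd.neg_pow, sub_neg_eq_add, ← two_mul, mul_assoc, integral_const_mul]
    split_ifs with hj1
    · subst hj1; simp [hK1]
    · rw [hKj j (by obtain ⟨k, rfl⟩ := hj_odd; omega) hj, mul_zero]

lemma ae_mem_of_map_eq_smul_restrict {Ω α : Type*} [MeasurableSpace Ω] [MeasurableSpace α]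
    {P : Measure Ω} {r : Ω → α} (hr : AEMeasurable r P) {c : ℝ≥0∞} {ν : Measure α} {s : Set α}
    (hs : MeasurableSet s) (h : P.map r = c • ν.restrict s) : ∀ᵐ ω ∂P, r ω ∈ s := by
  apply ae_of_ae_map hr
  rw [h]
  exact Measure.ae_smul_measure (ae_restrict_mem hs) c

section Estimator

variable {Ω : Type*} [MeasurableSpace Ω] {P : Measure Ω}
  {ι : Type*} [Fintype ι] {e : Ω → EuclideanSpace ℝ ι} {r : Ω → ℝ} {K : ℝ → ℝ}

lemma integral_pow_sub_neg_pow_mul_kernel_smul {l j : ℕ} (he_meas : Measurable e)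
    (hr_meas : Measurable r) (hindep : IndepFun e r P) (hK_meas : Measurable K)
    (hK1 : ∫ ω, r ω * K (r ω) ∂P = 1)
    (hKj : ∀ j : ℕ, 2 ≤ j → j ≤ l → ∫ ω, r ω ^ j * K (r ω) ∂P = 0)
    (A : EuclideanSpace ℝ ι → ℝ) (hA : Continuous A) (hj : j ≤ l) :
    ∫ ω, ((r ω ^ j - (-r ω) ^ j) * K (r ω)) • (A (e ω) • e ω) ∂P
      = (if j = 1 then 2 else 0 : ℝ) • ∫ ω, A (e ω) • e ω ∂P := by
  rw [hindep.symm.integral_fun_comp_smul_comp (f := fun t => (t ^ j - (-t) ^ j) * K t)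
    (g := fun y => A y • y) hr_meas.aemeasurable he_meas.aemeasurable
    (by fun_prop) (by fun_prop), integral_pow_sub_neg_pow_mul_kernel hK1 hKj hj]

lemma norm_integral_taylor_remainder_le {f : EuclideanSpace ℝ ι → ℝ} {l : ℕ} {β L : ℝ}
    (hf : ∀ x v, |f (x + v) - taylorPoly f x l v| ≤ L * ‖v‖ ^ β)
    (he_norm : ∀ ω, ‖e ω‖ = 1) (hKβ_int : Integrable (fun ω => |r ω| ^ β * |K (r ω)|) P)
    (x : EuclideanSpace ℝ ι) (γ : ℝ) :
    ‖∫ ω, (((f (x + (γ * r ω) • e ω) - taylorPoly f x l ((γ * r ω) • e ω))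
        - (f (x + (-(γ * r ω)) • e ω) - taylorPoly f x l ((-(γ * r ω)) • e ω))) * K (r ω))
          • e ω ∂P‖
      ≤ 2 * L * |γ| ^ β * ∫ ω, |r ω| ^ β * |K (r ω)| ∂P := by
  rw [← integral_const_mul]
  refine norm_integral_le_of_norm_le (hKβ_int.const_mul _) (Filter.Eventually.of_forall fun ω => ?_)
  have hrem : ∀ t : ℝ, |f (x + t • e ω) - taylorPoly f x l (t • e ω)| ≤ L * |t| ^ β :=
    fun t => by
    simpa [norm_smul, he_norm] using hf x (t • e ω)
  rw [norm_smul, he_norm, mul_one, Real.norm_eq_abs, abs_mul]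
  calc _ ≤ (L * |γ * r ω| ^ β + L * |γ * r ω| ^ β) * |K (r ω)| := by
        gcongr
        refine (abs_sub _ _).trans (add_le_add (hrem _) ?_)
        simpa only [abs_neg] using hrem (-(γ * r ω))
    _ = 2 * L * |γ| ^ β * (|r ω| ^ β * |K (r ω)|) := by
        rw [abs_mul, Real.mul_rpow (abs_nonneg _) (abs_nonneg _)]
        ring

lemma integral_noise_smul_eq_zero {ξ₁ ξ₂ : Ω → ℝ} (hξ₁ : AEMeasurable ξ₁ P)
    (hξ₂ : AEMeasurable ξ₂ P)
    (hξ_indep : IndepFun (fun ω => (ξ₁ ω, ξ₂ ω)) (fun ω => (e ω, r ω)) P)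
    (he_meas : Measurable e) (hr_meas : Measurable r) (hindep : IndepFun e r P)
    (hK_meas : Measurable K) (hK0 : ∫ ω, K (r ω) ∂P = 0) :
    ∫ ω, ((ξ₁ ω - ξ₂ ω) * K (r ω)) • e ω ∂P = 0 := by
  have hKe : ∫ ω, K (r ω) • e ω ∂P = 0 := by
    rw [hindep.symm.integral_fun_comp_smul_comp (f := K) (g := fun y => y) hr_meas.aemeasurable
      he_meas.aemeasurable (by fun_prop) (by fun_prop), hK0, zero_smul]
  have h := hξ_indep.integral_fun_comp_smul_comp (f := fun p => p.1 - p.2)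
    (g := fun q => K q.2 • q.1) (hξ₁.prodMk hξ₂) (he_meas.prodMk hr_meas).aemeasurable
    (by fun_prop) (by fun_prop)
  simp only [hKe, smul_zero] at h
  simpa only [mul_smul] using h

lemma integrable_noise_smul {ξ₁ ξ₂ : Ω → ℝ} (hξ₁ : Integrable ξ₁ P) (hξ₂ : Integrable ξ₂ P)
    (hξ_indep : IndepFun (fun ω => (ξ₁ ω, ξ₂ ω)) (fun ω => (e ω, r ω)) P)
    (he_meas : Measurable e) (he_norm : ∀ ω, ‖e ω‖ = 1) (hr_meas : Measurable r)
    (hK_meas : Measurable K) (hK_int : Integrable (fun ω => K (r ω)) P) :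
    Integrable (fun ω => ((ξ₁ ω - ξ₂ ω) * K (r ω)) • e ω) P := by
  have hKe : Integrable (fun ω => K (r ω) • e ω) P :=
    hK_int.norm.mono' (by fun_prop) (Filter.Eventually.of_forall fun ω => by
      rw [norm_smul, he_norm, mul_one])
  simp_rw [mul_smul]
  exact IndepFun.integrable_smul (X := fun ω => ξ₁ ω - ξ₂ ω) (Y := fun ω => K (r ω) • e ω)
    (hξ_indep.comp (φ := fun p : ℝ × ℝ => p.1 - p.2)
      (ψ := fun q : EuclideanSpace ℝ ι × ℝ => K q.2 • q.1) (by fun_prop)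
      (by fun_prop)) (hξ₁.sub hξ₂) hKe

variable [IsProbabilityMeasure P]

lemma integral_inner_smul_of_map_eq (he_meas : Measurable e) (he_norm : ∀ ω, ‖e ω‖ = 1)
    (he_unif : ∀ O : EuclideanSpace ℝ ι ≃ₗᵢ[ℝ] EuclideanSpace ℝ ι,
      Measure.map (fun ω => O (e ω)) P = Measure.map e P) (v : EuclideanSpace ℝ ι) :
    ∫ ω, ⟪v, e ω⟫ • e ω ∂P = (Fintype.card ι : ℝ)⁻¹ • v := by
  have := Measure.isProbabilityMeasure_map (μ := P) he_meas.aemeasurable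
  rw [← integral_map (f := fun y => ⟪v, y⟫ • y) he_meas.aemeasurable (by fun_prop)]
  refine integral_inner_smul_self_of_isometry_invariant ?_ (fun O => ?_) v
  · exact (ae_map_iff he_meas.aemeasurable (measurableSet_eq_fun (by fun_prop) (by fun_prop))).mpr
      (Filter.Eventually.of_forall he_norm)
  · rw [Measure.map_map O.continuous.measurable he_meas]
    exact he_unif O

lemma integrable_pow_sub_neg_pow_mul_kernel_smul (he_meas : Measurable e)
    (he_norm : ∀ ω, ‖e ω‖ = 1) (hr_meas : Measurable r) (hr1 : ∀ᵐ ω ∂P, |r ω| ≤ 1)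
    (hindep : IndepFun e r P) (hK_meas : Measurable K)
    (hK_int : Integrable (fun ω => K (r ω)) P) (A : EuclideanSpace ℝ ι → ℝ) (hA : Continuous A)
    (j : ℕ) :
    Integrable (fun ω => ((r ω ^ j - (-r ω) ^ j) * K (r ω)) • (A (e ω) • e ω)) P := by
  have hφ : Integrable (fun ω => (r ω ^ j - (-r ω) ^ j) * K (r ω)) P := by
    refine (hK_int.norm.const_mul 2).mono' (by fun_prop) ?_
    filter_upwards [hr1] with ω hω
    have hpow : ∀ a : ℝ, |a| ≤ 1 → |a ^ j| ≤ 1 := fun a ha => by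
      rw [abs_pow]; exact pow_le_one₀ (abs_nonneg a) ha
    rw [norm_mul, Real.norm_eq_abs, Real.norm_eq_abs]
    gcongr
    calc |r ω ^ j - (-r ω) ^ j| ≤ |r ω ^ j| + |(-r ω) ^ j| := abs_sub _ _
      _ ≤ 2 := by linarith [hpow _ hω, hpow (-r ω) (by rwa [abs_neg])]
  have hψ : Integrable (fun ω => A (e ω) • e ω) P := by
    obtain ⟨C, hC⟩ := (isCompact_sphere (0 : EuclideanSpace ℝ ι) 1).exists_bound_of_continuousOn
      hA.continuousOn
    refine (integrable_const C).mono' (by fun_prop) (Filter.Eventually.of_forall fun ω => ?_)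
    rw [norm_smul, he_norm, mul_one]
    exact hC _ (by simp [he_norm])
  exact (hindep.symm.comp (φ := fun t => (t ^ j - (-t) ^ j) * K t) (ψ := fun y => A y • y)
    (by fun_prop) (by fun_prop)).integrable_smul hφ hψ

lemma integrable_taylorPoly_central_difference_smul (he_meas : Measurable e)
    (he_norm : ∀ ω, ‖e ω‖ = 1) (hr_meas : Measurable r) (hr1 : ∀ᵐ ω ∂P, |r ω| ≤ 1)
    (hindep : IndepFun e r P) (hK_meas : Measurable K)
    (hK_int : Integrable (fun ω => K (r ω)) P) (f : EuclideanSpace ℝ ι → ℝ)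
    (x : EuclideanSpace ℝ ι) (l : ℕ) (γ : ℝ) :
    Integrable (fun ω => ((taylorPoly f x l ((γ * r ω) • e ω)
      - taylorPoly f x l ((-(γ * r ω)) • e ω)) * K (r ω)) • e ω) P := by
  simp_rw [taylorPoly_central_difference_smul_eq_sum]
  exact integrable_finsetSum _ fun j _ => (integrable_pow_sub_neg_pow_mul_kernel_smul he_meas
    he_norm hr_meas hr1 hindep hK_meas hK_int (fun v => iteratedFDeriv ℝ j f x fun _ => v)
    (by fun_prop) j).fun_smul _

theorem integral_taylorPoly_central_difference_smul {l : ℕ} (hl : 1 ≤ l) (he_meas : Measurable e)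
    (he_norm : ∀ ω, ‖e ω‖ = 1)
    (he_unif : ∀ O : EuclideanSpace ℝ ι ≃ₗᵢ[ℝ] EuclideanSpace ℝ ι,
      Measure.map (fun ω => O (e ω)) P = Measure.map e P)
    (hr_meas : Measurable r) (hr1 : ∀ᵐ ω ∂P, |r ω| ≤ 1) (hindep : IndepFun e r P)
    (hK_meas : Measurable K) (hK_int : Integrable (fun ω => K (r ω)) P)
    (hK1 : ∫ ω, r ω * K (r ω) ∂P = 1)
    (hKj : ∀ j : ℕ, 2 ≤ j → j ≤ l → ∫ ω, r ω ^ j * K (r ω) ∂P = 0)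
    (f : EuclideanSpace ℝ ι → ℝ) (x : EuclideanSpace ℝ ι) (γ : ℝ) :
    ∫ ω, ((taylorPoly f x l ((γ * r ω) • e ω)
      - taylorPoly f x l ((-(γ * r ω)) • e ω)) * K (r ω)) • e ω ∂P
      = (2 * γ / Fintype.card ι) • gradient f x := by
  simp_rw [taylorPoly_central_difference_smul_eq_sum]
  rw [integral_finsetSum _ fun j _ => (integrable_pow_sub_neg_pow_mul_kernel_smul he_meas
    he_norm hr_meas hr1 hindep hK_meas hK_int (fun v => iteratedFDeriv ℝ j f x fun _ => v)
    (by fun_prop) j).fun_smul _]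
  rw [Finset.sum_congr rfl fun j hj => by
    rw [integral_smul, integral_pow_sub_neg_pow_mul_kernel_smul he_meas hr_meas hindep hK_meas
      hK1 hKj (fun v => iteratedFDeriv ℝ j f x fun _ => v) (by fun_prop)
      (Finset.mem_range_succ_iff.mp hj)]]
  rw [Finset.sum_eq_single 1 (fun j _ hj1 => by simp [hj1]) (by simp; omega)]
  simp_rw [iteratedFDeriv_one_apply_const_eq_inner_gradient]
  rw [integral_inner_smul_of_map_eq he_meas he_norm he_unif, smul_smul, smul_smul]
  congr 1
  simp only [Nat.factorial_one, Nat.cast_one, inv_one, one_mul, pow_one, if_true]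
  ring

theorem norm_integral_central_difference_sub_gradient_le {f : EuclideanSpace ℝ ι → ℝ} {l : ℕ}
    {β L : ℝ} (hl : 1 ≤ l)
    (hf : ∀ x v, |f (x + v) - taylorPoly f x l v| ≤ L * ‖v‖ ^ β)
    (he_meas : Measurable e) (he_norm : ∀ ω, ‖e ω‖ = 1)
    (he_unif : ∀ O : EuclideanSpace ℝ ι ≃ₗᵢ[ℝ] EuclideanSpace ℝ ι,
      Measure.map (fun ω => O (e ω)) P = Measure.map e P)
    (hr_meas : Measurable r) (hr1 : ∀ᵐ ω ∂P, |r ω| ≤ 1) (hindep : IndepFun e r P)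
    (hK_meas : Measurable K) (hK_int : Integrable (fun ω => K (r ω)) P)
    (hK1 : ∫ ω, r ω * K (r ω) ∂P = 1)
    (hKj : ∀ j : ℕ, 2 ≤ j → j ≤ l → ∫ ω, r ω ^ j * K (r ω) ∂P = 0)
    (hKβ_int : Integrable (fun ω => |r ω| ^ β * |K (r ω)|) P) (x : EuclideanSpace ℝ ι) (γ : ℝ)
    (hint : Integrable (fun ω =>
      ((f (x + (γ * r ω) • e ω) - f (x - (γ * r ω) • e ω)) * K (r ω)) • e ω) P) :
    ‖∫ ω, ((f (x + (γ * r ω) • e ω) - f (x - (γ * r ω) • e ω)) * K (r ω)) • e ω ∂P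
        - (2 * γ / Fintype.card ι) • gradient f x‖
      ≤ 2 * L * |γ| ^ β * ∫ ω, |r ω| ^ β * |K (r ω)| ∂P := by
  set S := fun ω => ((taylorPoly f x l ((γ * r ω) • e ω)
    - taylorPoly f x l ((-(γ * r ω)) • e ω)) * K (r ω)) • e ω
  set R := fun ω => (((f (x + (γ * r ω) • e ω) - taylorPoly f x l ((γ * r ω) • e ω))
    - (f (x + (-(γ * r ω)) • e ω) - taylorPoly f x l ((-(γ * r ω)) • e ω))) * K (r ω)) • e ω
  have hsplit : (fun ω => ((f (x + (γ * r ω) • e ω) - f (x - (γ * r ω) • e ω)) * K (r ω)) • e ω)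
      = fun ω => S ω + R ω := by
    funext ω
    simp only [S, R, ← add_smul, neg_smul, ← sub_eq_add_neg]
    ring_nf
  have hS_int : Integrable S P := integrable_taylorPoly_central_difference_smul he_meas he_norm
    hr_meas hr1 hindep hK_meas hK_int f x l γ
  have hR_int : Integrable R P :=
    (hint.sub hS_int).congr (Filter.Eventually.of_forall fun ω => by simp [hsplit])
  rw [hsplit, integral_add hS_int hR_int, integral_taylorPoly_central_difference_smul hl he_meas
    he_norm he_unif hr_meas hr1 hindep hK_meas hK_int hK1 hKj, add_sub_cancel_left]
  exact norm_integral_taylor_remainder_le hf he_norm hKβ_int x γ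

end Estimator

theorem kernel_bias_stochastic_noise_general
    {Ω : Type*} {m0 : MeasurableSpace Ω} (P : Measure Ω) [IsProbabilityMeasure P]
    {d : ℕ} (β : ℝ) (l : ℕ) (hβ : 2 ≤ β) (hl' : β ≤ (l : ℝ) + 1)
    (f : EuclideanSpace ℝ (Fin d) → ℝ) (Lβ : ℝ)
    (hHolder : ∀ x z : EuclideanSpace ℝ (Fin d),
      |f z - ∑ j ∈ Finset.range (l + 1),
          ((j.factorial : ℝ)⁻¹) * iteratedFDeriv ℝ j f x (fun _ => z - x)|
        ≤ Lβ * ‖z - x‖ ^ β)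
    (γ : ℝ) (hγ : 0 < γ)
    (e : Ω → EuclideanSpace ℝ (Fin d)) (r : Ω → ℝ) (ξ₁ ξ₂ : Ω → ℝ) (K : ℝ → ℝ)
    (he_meas : Measurable e) (he_norm : ∀ ω, ‖e ω‖ = 1)
    (he_unif : ∀ O : EuclideanSpace ℝ (Fin d) ≃ₗᵢ[ℝ] EuclideanSpace ℝ (Fin d),
      Measure.map (fun ω => O (e ω)) P = Measure.map e P)
    (hr_meas : Measurable r)
    (hr_unif : Measure.map r P = (2⁻¹ : ℝ≥0∞) • volume.restrict (Set.Icc (-1 : ℝ) 1))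
    (hindep : IndepFun e r P)
    (hξ₁_int : Integrable ξ₁ P) (hξ₂_int : Integrable ξ₂ P)
    (hξ_indep : IndepFun (fun ω => (ξ₁ ω, ξ₂ ω)) (fun ω => (e ω, r ω)) P)
    (hK_meas : Measurable K)
    (hK0 : ∫ ω, K (r ω) ∂P = 0)
    (hK1 : ∫ ω, r ω * K (r ω) ∂P = 1)
    (hKj : ∀ j : ℕ, 2 ≤ j → j ≤ l → ∫ ω, (r ω) ^ j * K (r ω) ∂P = 0)
    (hKβ_int : Integrable (fun ω => |r ω| ^ β * |K (r ω)|) P)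
    (hK_int : Integrable (fun ω => |K (r ω)|) P)
    (x : EuclideanSpace ℝ (Fin d))
    (hg_int : Integrable (fun ω =>
      ((d : ℝ) / (2 * γ) *
          ((f (x + (γ * r ω) • e ω) + ξ₁ ω)
            - (f (x - (γ * r ω) • e ω) + ξ₂ ω)) * K (r ω)) • e ω) P) :
    ‖(∫ ω, ((d : ℝ) / (2 * γ) *
          ((f (x + (γ * r ω) • e ω) + ξ₁ ω)
            - (f (x - (γ * r ω) • e ω) + ξ₂ ω)) * K (r ω)) • e ω ∂P)
        - gradient f x‖
      ≤ (∫ ω, |r ω| ^ β * |K (r ω)| ∂P) * d * Lβ * γ ^ (β - 1) := by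
  have hd : (0 : ℝ) < d := by
    obtain ⟨ω⟩ := nonempty_of_isProbabilityMeasure P
    rcases Nat.eq_zero_or_pos d with rfl | hd
    · simpa [Subsingleton.elim (e ω) 0] using he_norm ω
    · exact_mod_cast hd
  have hl : 1 ≤ l := by exact_mod_cast (by linarith : (1 : ℝ) ≤ l)
  have hf : ∀ x v, |f (x + v) - taylorPoly f x l v| ≤ Lβ * ‖v‖ ^ β :=
    abs_sub_taylorPoly_le hHolder
  have hr1 : ∀ᵐ ω ∂P, |r ω| ≤ 1 :=
    (ae_mem_of_map_eq_smul_restrict hr_meas.aemeasurable measurableSet_Icc hr_unif).mono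
      fun ω h => abs_le.mpr h
  have hKr_int : Integrable (fun ω => K (r ω)) P :=
    (integrable_norm_iff (hK_meas.comp hr_meas).aestronglyMeasurable).mp hK_int
  set c := (d : ℝ) / (2 * γ) with hc
  have hc_pos : 0 < c := by positivity
  set noise := fun ω => ((ξ₁ ω - ξ₂ ω) * K (r ω)) • e ω
  set central := fun ω => ((f (x + (γ * r ω) • e ω) - f (x - (γ * r ω) • e ω)) * K (r ω)) • e ω
  have hdecomp : ∀ ω, (c * ((f (x + (γ * r ω) • e ω) + ξ₁ ω)
      - (f (x - (γ * r ω) • e ω) + ξ₂ ω)) * K (r ω)) • e ω = c • (noise ω + central ω) := by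
    intro ω
    simp only [noise, central, smul_smul, ← add_smul]
    ring_nf
  have hnoise_int : Integrable noise P := integrable_noise_smul hξ₁_int hξ₂_int hξ_indep he_meas
    he_norm hr_meas hK_meas hKr_int
  have hcentral_int : Integrable central P :=
    ((hg_int.smul c⁻¹).sub hnoise_int).congr (Filter.Eventually.of_forall fun ω => by
      simp [hdecomp, smul_smul, inv_mul_cancel₀ hc_pos.ne'])
  have hgrad : gradient f x = c • ((2 * γ / Fintype.card (Fin d)) • gradient f x) := by
    rw [smul_smul, Fintype.card_fin, hc]
    field_simp
    simp
  simp_rw [hdecomp]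
  rw [integral_smul, integral_add hnoise_int hcentral_int, integral_noise_smul_eq_zero
    hξ₁_int.aemeasurable hξ₂_int.aemeasurable hξ_indep he_meas hr_meas hindep hK_meas hK0,
    zero_add, hgrad, ← smul_sub, norm_smul, Real.norm_of_nonneg hc_pos.le]
  calc c * ‖∫ ω, central ω ∂P - (2 * γ / Fintype.card (Fin d)) • gradient f x‖
      ≤ c * (2 * Lβ * |γ| ^ β * ∫ ω, |r ω| ^ β * |K (r ω)| ∂P) := by
        gcongr
        exact norm_integral_central_difference_sub_gradient_le hl hf he_meas he_norm he_unif
          hr_meas hr1 hindep hK_meas hKr_int hK1 hKj hKβ_int x γ hcentral_int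
    _ = (∫ ω, |r ω| ^ β * |K (r ω)| ∂P) * d * Lβ * γ ^ (β - 1) := by
        rw [abs_of_pos hγ, Real.rpow_sub_one hγ.ne', hc]
        field_simp

/-- Bias bound for the one-point kernel-based gradient approximation of a
higher-order smooth (Hölder class `F_β(L_β)`) function, where the zeroth-order oracle is
corrupted by additive adversarial stochastic noises `ξ₁, ξ₂` independent of `(e, r)`:
`‖E[g̃(x,ξ,e,r)] − ∇f(x)‖ ≤ κ_β d L_β γ^{β−1}`. -/
theorem kernel_bias_stochastic_noise
    {Ω : Type*} {m0 : MeasurableSpace Ω} (P : Measure Ω) [IsProbabilityMeasure P]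
    {d : ℕ} (β : ℝ) (l : ℕ) (hβ : 2 ≤ β) (hl : (l : ℝ) < β) (hl' : β ≤ (l : ℝ) + 1)
    (f : EuclideanSpace ℝ (Fin d) → ℝ) (Lβ : ℝ)
    (hf : ContDiff ℝ (l : ℕ∞) f)
    (hHolder : ∀ x z : EuclideanSpace ℝ (Fin d),
      |f z - ∑ j ∈ Finset.range (l + 1),
          ((j.factorial : ℝ)⁻¹) * iteratedFDeriv ℝ j f x (fun _ => z - x)|
        ≤ Lβ * ‖z - x‖ ^ β)
    (γ : ℝ) (hγ : 0 < γ)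
    (e : Ω → EuclideanSpace ℝ (Fin d)) (r : Ω → ℝ) (ξ₁ ξ₂ : Ω → ℝ) (K : ℝ → ℝ)
    (he_meas : Measurable e) (he_norm : ∀ ω, ‖e ω‖ = 1)
    (he_unif : ∀ O : EuclideanSpace ℝ (Fin d) ≃ₗᵢ[ℝ] EuclideanSpace ℝ (Fin d),
      Measure.map (fun ω => O (e ω)) P = Measure.map e P)
    (hr_meas : Measurable r)
    (hr_unif : Measure.map r P = (2⁻¹ : ℝ≥0∞) • volume.restrict (Set.Icc (-1 : ℝ) 1))
    (hindep : IndepFun e r P)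
    (hξ₁_meas : Measurable ξ₁) (hξ₂_meas : Measurable ξ₂)
    (hξ₁_int : Integrable ξ₁ P) (hξ₂_int : Integrable ξ₂ P)
    (hξ_indep : IndepFun (fun ω => (ξ₁ ω, ξ₂ ω)) (fun ω => (e ω, r ω)) P)
    (hK_meas : Measurable K)
    (hK0 : ∫ ω, K (r ω) ∂P = 0)
    (hK1 : ∫ ω, r ω * K (r ω) ∂P = 1)
    (hKj : ∀ j : ℕ, 2 ≤ j → j ≤ l → ∫ ω, (r ω) ^ j * K (r ω) ∂P = 0)
    (hKβ_int : Integrable (fun ω => |r ω| ^ β * |K (r ω)|) P)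
    (hK_int : Integrable (fun ω => |K (r ω)|) P)
    (x : EuclideanSpace ℝ (Fin d))
    (hg_int : Integrable (fun ω =>
      ((d : ℝ) / (2 * γ) *
          ((f (x + (γ * r ω) • e ω) + ξ₁ ω)
            - (f (x - (γ * r ω) • e ω) + ξ₂ ω)) * K (r ω)) • e ω) P) :
    ‖(∫ ω, ((d : ℝ) / (2 * γ) *
          ((f (x + (γ * r ω) • e ω) + ξ₁ ω)
            - (f (x - (γ * r ω) • e ω) + ξ₂ ω)) * K (r ω)) • e ω ∂P)
        - gradient f x‖
      ≤ (∫ ω, |r ω| ^ β * |K (r ω)| ∂P) * d * Lβ * γ ^ (β - 1) :=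
  kernel_bias_stochastic_noise_general (m0 := m0) P β l hβ hl' f Lβ hHolder γ hγ e r ξ₁ ξ₂ K he_meas
    he_norm he_unif hr_meas hr_unif hindep hξ₁_int hξ₂_int hξ_indep hK_meas hK0 hK1 hKj hKβ_int
    hK_int x hg_int
end

section
/- (Two-point feedback bias bound.) Let (Ξ, ν) be a probability space, F : ℝ^d × Ξ → ℝ with each F(·, ξ) integrable, and let f(x) := E_ξ[F(x, ξ)]. Assume β ≥ 2 with l the largest integer strictly less than β and that f belongs to the Hölder class F_β(L_β). Let δ : ℝ^d → ℝ satisfy |δ(x)| ≤ Δ for all x, let ξ be distributed according to ν independently of (e, r), and define the two-point kernel gradient approximation g̃(x, ξ, e, r) := d (F(x + γ r e, ξ) + δ(x + γ r e) − F(x − γ r e, ξ) − δ(x − γ r e)) K(r) e/(2γ). Then for every x ∈ ℝ^d, ‖E[g̃(x, ξ, e, r)] − ∇f(x)‖₂ ≤ κ_β d L_β γ^{β−1} + κ₁ d Δ/γ. -/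
/-!
Averaging first over the common realization `ξ`, which is independent of `(e, r)`, turns
`F(·, ξ)` into `f`; as the estimate is linear in the evaluated function, the noise `δ` splits off
and costs at most `κ₁ d Δ / γ`. Write `f = T + (f - T)` with `T` the Taylor polynomial of order `l`
at `x`: the Hölder condition bounds `f - T` by `L_β ‖z - x‖^β`, which costs `κ_β d L_β γ^{β-1}`.
In `T(x + γ r e) - T(x - γ r e)` only the odd orders survive, and by independence of `e` and `r`
the order-`j` term has mean proportional to `E[r^j K(r)] E[D^j f(x)[e,…,e] e]`. This vanishes for
odd `j ≥ 3`, while for `j = 1` the isotropy `d E[⟪v, e⟫ e] = v` of a uniform direction returns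
exactly `∇f(x)`.
-/

open MeasureTheory ProbabilityTheory
open scoped ENNReal

section IsometryInvariantLaw

variable {Ω ι : Type*} {m0 : MeasurableSpace Ω} {P : Measure Ω} [Fintype ι]
  {e : Ω → EuclideanSpace ℝ ι}

def HasIsometryInvariantLaw (e : Ω → EuclideanSpace ℝ ι) (P : Measure Ω) : Prop :=
  ∀ O : EuclideanSpace ℝ ι ≃ₗᵢ[ℝ] EuclideanSpace ℝ ι,
    Measure.map (fun ω => O (e ω)) P = Measure.map e P

lemma integrable_coord_mul_coord_s18 [IsFiniteMeasure P] (he_meas : Measurable e)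
    (he_norm : ∀ ω, ‖e ω‖ = 1) (i j : ι) : Integrable (fun ω => e ω i * e ω j) P := by
  refine .of_bound (by fun_prop) 1 (ae_of_all _ fun ω => ?_)
  rw [norm_mul, ← one_mul 1]
  exact mul_le_mul (by simpa [he_norm ω] using PiLp.norm_apply_le (e ω) i)
    (by simpa [he_norm ω] using PiLp.norm_apply_le (e ω) j) (norm_nonneg _) zero_le_one

namespace HasIsometryInvariantLaw

lemma integral_comp (he_unif : HasIsometryInvariantLaw e P) (he_meas : Measurable e)
    (O : EuclideanSpace ℝ ι ≃ₗᵢ[ℝ] EuclideanSpace ℝ ι) {ψ : EuclideanSpace ℝ ι → ℝ}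
    (hψ : Measurable ψ) : ∫ ω, ψ (O (e ω)) ∂P = ∫ ω, ψ (e ω) ∂P := by
  rw [← integral_map (φ := fun ω => O (e ω)) (by fun_prop) hψ.aestronglyMeasurable, he_unif O,
    integral_map he_meas.aemeasurable hψ.aestronglyMeasurable]

lemma integral_coord_mul_coord_of_ne (he_unif : HasIsometryInvariantLaw e P)
    (he_meas : Measurable e) {i j : ι} (hij : i ≠ j) : ∫ ω, e ω i * e ω j ∂P = 0 := by
  classical
  -- flipping the sign of the `i`-th coordinate preserves the law of `e` and negates `e i * e j`
  let O : EuclideanSpace ℝ ι ≃ₗᵢ[ℝ] EuclideanSpace ℝ ι := LinearIsometryEquiv.piLpCongrRight 2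
    fun k => if k = i then LinearIsometryEquiv.neg ℝ else LinearIsometryEquiv.refl ℝ ℝ
  have hO (y : EuclideanSpace ℝ ι) : O y i * O y j = -(y i * y j) := by
    simp [O, LinearIsometryEquiv.piLpCongrRight_apply, hij.symm]
  have := he_unif.integral_comp he_meas O (ψ := fun y => y i * y j) (by fun_prop)
  simp only [hO, integral_neg] at this
  linarith

lemma card_mul_integral_coord_mul_self [IsProbabilityMeasure P]
    (he_unif : HasIsometryInvariantLaw e P) (he_meas : Measurable e)
    (he_norm : ∀ ω, ‖e ω‖ = 1) (i : ι) :
    (Fintype.card ι : ℝ) * ∫ ω, e ω i * e ω i ∂P = 1 := by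
  classical
  -- permuting coordinates preserves the law of `e`, so all `E[e k ^ 2]` agree; they sum to `1`
  have hswap (k : ι) : ∫ ω, e ω k * e ω k ∂P = ∫ ω, e ω i * e ω i ∂P := by
    rw [← he_unif.integral_comp he_meas (LinearIsometryEquiv.piLpCongrLeft 2 ℝ ℝ (Equiv.swap i k))
      (ψ := fun y => y i * y i) (by fun_prop)]
    simp
  have hsum (ω : Ω) : ∑ k, e ω k * e ω k = 1 := by
    simpa [sq, he_norm ω] using (EuclideanSpace.real_norm_sq_eq (e ω)).symm
  calc (Fintype.card ι : ℝ) * ∫ ω, e ω i * e ω i ∂P = ∑ k, ∫ ω, e ω k * e ω k ∂P := by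
        simp [hswap]
    _ = 1 := by
        rw [← integral_finsetSum _ fun k _ => integrable_coord_mul_coord_s18 he_meas he_norm k k]
        simp [hsum]

lemma card_smul_integral_inner_smul [IsProbabilityMeasure P]
    (he_unif : HasIsometryInvariantLaw e P) (he_meas : Measurable e)
    (he_norm : ∀ ω, ‖e ω‖ = 1) (v : EuclideanSpace ℝ ι) :
    (Fintype.card ι : ℝ) • ∫ ω, inner ℝ v (e ω) • e ω ∂P = v := by
  classical
  have hint : Integrable (fun ω => inner ℝ v (e ω) • e ω) P :=
    .of_bound (by fun_prop) ‖v‖ (ae_of_all _ fun ω => by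
      simpa [norm_smul, he_norm ω] using abs_real_inner_le_norm v (e ω))
  have hcoord (k : ι) :
      (∫ ω, inner ℝ v (e ω) • e ω ∂P) k = ∑ i, v i * ∫ ω, e ω i * e ω k ∂P := by
    change EuclideanSpace.proj (𝕜 := ℝ) k _ = _
    rw [← (EuclideanSpace.proj k).integral_comp_comm hint]
    simp_rw [← integral_const_mul]
    rw [← integral_finsetSum _ fun i _ =>
      (integrable_coord_mul_coord_s18 he_meas he_norm i k).const_mul _]
    congr 1 with ω
    simp only [PiLp.inner_apply, EuclideanSpace.proj, PiLp.proj_apply, PiLp.smul_apply,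
      smul_eq_mul, Finset.sum_mul]
    exact Finset.sum_congr rfl fun i _ => by simp only [RCLike.inner_apply, conj_trivial]; ring
  ext k
  rw [PiLp.smul_apply, hcoord, Finset.sum_eq_single k (fun i _ hik => by
    rw [he_unif.integral_coord_mul_coord_of_ne he_meas hik, mul_zero]) (by simp), smul_eq_mul,
    mul_left_comm, he_unif.card_mul_integral_coord_mul_self he_meas he_norm, mul_one]

end HasIsometryInvariantLaw

end IsometryInvariantLaw

section Independence

variable {Ω α Ξ E : Type*} {m0 : MeasurableSpace Ω} {P : Measure Ω} [MeasurableSpace α]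
  [MeasurableSpace Ξ] {ν : Measure Ξ} [NormedAddCommGroup E]
  {X : Ω → α} {ξ : Ω → Ξ} {G : α × Ξ → E}

lemma integrable_prod_of_indepFun [IsFiniteMeasure P] (hX : Measurable X) (hξ : Measurable ξ)
    (hind : IndepFun X ξ P) (hG : StronglyMeasurable G)
    (hint : Integrable (fun ω => G (X ω, ξ ω)) P) : Integrable G ((P.map X).prod (P.map ξ)) := by
  rw [← (indepFun_iff_map_prod_eq_prod_map_map hX.aemeasurable hξ.aemeasurable).mp hind]
  exact (integrable_map_measure hG.aestronglyMeasurable (by fun_prop)).mpr hint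

lemma integrable_integral_comp_of_indepFun [NormedSpace ℝ E] [IsFiniteMeasure P]
    (hX : Measurable X) (hξ : Measurable ξ) (hξ_law : P.map ξ = ν) (hind : IndepFun X ξ P)
    (hG : StronglyMeasurable G) (hint : Integrable (fun ω => G (X ω, ξ ω)) P) :
    Integrable (fun ω => ∫ s, G (X ω, s) ∂ν) P := by
  subst hξ_law
  exact (integrable_prod_of_indepFun hX hξ hind hG hint).integral_prod_left.comp_measurable hX

lemma integral_comp_eq_integral_integral_of_indepFun [NormedSpace ℝ E] [CompleteSpace E]
    [IsFiniteMeasure P] (hX : Measurable X) (hξ : Measurable ξ) (hξ_law : P.map ξ = ν)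
    (hind : IndepFun X ξ P)
    (hG : StronglyMeasurable G) (hint : Integrable (fun ω => G (X ω, ξ ω)) P) :
    ∫ ω, G (X ω, ξ ω) ∂P = ∫ ω, ∫ s, G (X ω, s) ∂ν ∂P := by
  subst hξ_law
  have hG_int := integrable_prod_of_indepFun hX hξ hind hG hint
  rw [← integral_map (φ := fun ω => (X ω, ξ ω)) (by fun_prop) hG.aestronglyMeasurable,
    (indepFun_iff_map_prod_eq_prod_map_map hX.aemeasurable hξ.aemeasurable).mp hind,
    integral_prod G hG_int,
    integral_map hX.aemeasurable hG_int.integral_prod_left.aestronglyMeasurable]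

end Independence

lemma ae_mem_Icc_of_map_eq_smul_restrict {Ω : Type*} {m0 : MeasurableSpace Ω} {P : Measure Ω}
    {r : Ω → ℝ} (hr : Measurable r) {c : ℝ≥0∞} {a b : ℝ}
    (h : P.map r = c • volume.restrict (Set.Icc a b)) : ∀ᵐ ω ∂P, r ω ∈ Set.Icc a b :=
  ae_of_ae_map hr.aemeasurable (h ▸ Measure.ae_smul_measure (ae_restrict_mem measurableSet_Icc) c)

section TwoPointKernelEstimate

variable {E : Type*} [NormedAddCommGroup E] [NormedSpace ℝ E] {d γ : ℝ} {K : ℝ → ℝ}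
  {x u : E} {r : ℝ}

noncomputable def twoPointKernelEstimate (d γ : ℝ) (K : ℝ → ℝ) (h : E → ℝ) (x u : E) (r : ℝ) :
    E :=
  (d / (2 * γ) * (h (x + (γ * r) • u) - h (x - (γ * r) • u)) * K r) • u

lemma twoPointKernelEstimate_add (h₁ h₂ : E → ℝ) :
    twoPointKernelEstimate d γ K (fun y => h₁ y + h₂ y) x u r =
      twoPointKernelEstimate d γ K h₁ x u r + twoPointKernelEstimate d γ K h₂ x u r := by
  simp only [twoPointKernelEstimate, ← add_smul]
  ring_nf

lemma twoPointKernelEstimate_sub (h₁ h₂ : E → ℝ) :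
    twoPointKernelEstimate d γ K (fun y => h₁ y - h₂ y) x u r =
      twoPointKernelEstimate d γ K h₁ x u r - twoPointKernelEstimate d γ K h₂ x u r := by
  simp only [twoPointKernelEstimate, ← sub_smul]
  ring_nf

lemma norm_twoPointKernelEstimate_le {h : E → ℝ} (hd : 0 ≤ d) (hγ : 0 ≤ γ) (hu : ‖u‖ = 1)
    {B : ℝ} (hB : |h (x + (γ * r) • u) - h (x - (γ * r) • u)| ≤ B) :
    ‖twoPointKernelEstimate d γ K h x u r‖ ≤ d / (2 * γ) * B * |K r| := by
  rw [twoPointKernelEstimate, norm_smul, hu, mul_one, Real.norm_eq_abs, abs_mul, abs_mul,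
    abs_of_nonneg (by positivity : 0 ≤ d / (2 * γ))]
  gcongr

lemma measurable_twoPointKernelEstimate [MeasurableSpace E] [BorelSpace E]
    [SecondCountableTopology E] {α : Type*} [MeasurableSpace α] {H : α → E → ℝ}
    (hH : Measurable (Function.uncurry H)) {X : α → E} {R : α → ℝ} (hX : Measurable X)
    (hR : Measurable R) (hK : Measurable K) :
    Measurable fun a => twoPointKernelEstimate d γ K (H a) x (X a) (R a) := by
  have hplus : Measurable fun a => H a (x + (γ * R a) • X a) :=
    hH.comp (measurable_id.prodMk (by fun_prop))
  have hminus : Measurable fun a => H a (x - (γ * R a) • X a) :=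
    hH.comp (measurable_id.prodMk (by fun_prop))
  unfold twoPointKernelEstimate
  fun_prop

lemma integral_twoPointKernelEstimate [CompleteSpace E] {Ξ : Type*} [MeasurableSpace Ξ]
    {ν : Measure Ξ} {H : Ξ → E → ℝ} (hH : ∀ y, Integrable (fun s => H s y) ν) :
    ∫ s, twoPointKernelEstimate d γ K (H s) x u r ∂ν =
      twoPointKernelEstimate d γ K (fun y => ∫ s, H s y ∂ν) x u r := by
  simp only [twoPointKernelEstimate]
  rw [integral_smul_const, integral_mul_const, integral_const_mul, integral_sub (hH _) (hH _)]

lemma norm_twoPointKernelEstimate_le_of_abs_le {h : E → ℝ} {Δ : ℝ} (hd : 0 ≤ d) (hγ : 0 ≤ γ)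
    (hu : ‖u‖ = 1) (hh : ∀ y, |h y| ≤ Δ) :
    ‖twoPointKernelEstimate d γ K h x u r‖ ≤ d / (2 * γ) * (Δ + Δ) * |K r| :=
  norm_twoPointKernelEstimate_le hd hγ hu ((abs_sub _ _).trans (add_le_add (hh _) (hh _)))

end TwoPointKernelEstimate

section BoundedNoise

variable {E Ω : Type*} [NormedAddCommGroup E] [NormedSpace ℝ E] {d γ : ℝ} {K : ℝ → ℝ} {x : E}
  {m0 : MeasurableSpace Ω} {P : Measure Ω} {e : Ω → E} {r : Ω → ℝ} {h : E → ℝ} {Δ : ℝ}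

lemma integrable_twoPointKernelEstimate_of_abs_le [MeasurableSpace E] [BorelSpace E]
    [SecondCountableTopology E] (hd : 0 ≤ d) (hγ : 0 ≤ γ) (he_meas : Measurable e)
    (he_norm : ∀ ω, ‖e ω‖ = 1) (hr_meas : Measurable r) (hK_meas : Measurable K)
    (hK_int : Integrable (fun ω => |K (r ω)|) P) (hh_meas : Measurable h)
    (hh : ∀ y, |h y| ≤ Δ) :
    Integrable (fun ω => twoPointKernelEstimate d γ K h x (e ω) (r ω)) P :=
  (hK_int.const_mul _).mono'
    (measurable_twoPointKernelEstimate (H := fun _ => h) (hh_meas.comp measurable_snd) he_meas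
      hr_meas hK_meas).aestronglyMeasurable
    (ae_of_all _ fun ω => norm_twoPointKernelEstimate_le_of_abs_le hd hγ (he_norm ω) hh)

lemma norm_integral_twoPointKernelEstimate_le_of_abs_le (hd : 0 ≤ d) (hγ : 0 < γ)
    (he_norm : ∀ ω, ‖e ω‖ = 1) (hK_int : Integrable (fun ω => |K (r ω)|) P)
    (hh : ∀ y, |h y| ≤ Δ) :
    ‖∫ ω, twoPointKernelEstimate d γ K h x (e ω) (r ω) ∂P‖ ≤
      (∫ ω, |K (r ω)| ∂P) * d * Δ / γ := by
  refine (norm_integral_le_of_norm_le (hK_int.const_mul _) (ae_of_all _ fun ω =>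
    norm_twoPointKernelEstimate_le_of_abs_le hd hγ.le (he_norm ω) hh)).trans_eq ?_
  rw [integral_const_mul]
  field_simp
  ring

end BoundedNoise

section TaylorPolynomial

variable {E : Type*} [NormedAddCommGroup E] [NormedSpace ℝ E] {d γ : ℝ} {K : ℝ → ℝ}
  {f : E → ℝ} {l : ℕ} {x : E}

noncomputable def taylorPolynomial (f : E → ℝ) (l : ℕ) (x y : E) : ℝ :=
  ∑ j ∈ Finset.range (l + 1), (j.factorial : ℝ)⁻¹ * iteratedFDeriv ℝ j f x (fun _ => y - x)

lemma iteratedFDeriv_apply_smul_const (j : ℕ) (c : ℝ) (u : E) :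
    iteratedFDeriv ℝ j f x (fun _ => c • u) = c ^ j * iteratedFDeriv ℝ j f x (fun _ => u) := by
  simpa using (iteratedFDeriv ℝ j f x).map_smul_univ (fun _ => c) (fun _ => u)

lemma continuous_iteratedFDeriv_apply_diag (j : ℕ) :
    Continuous fun u : E => iteratedFDeriv ℝ j f x (fun _ => u) :=
  (iteratedFDeriv ℝ j f x).cont.comp (continuous_pi fun _ => continuous_id)

lemma twoPointKernelEstimate_taylorPolynomial (u : E) (r : ℝ) :
    twoPointKernelEstimate d γ K (taylorPolynomial f l x) x u r =
      ∑ j ∈ Finset.range (l + 1), (d / (2 * γ) * (j.factorial : ℝ)⁻¹ * (1 - (-1) ^ j) * γ ^ j) •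
        ((r ^ j * K r) • (iteratedFDeriv ℝ j f x (fun _ => u) • u)) := by
  simp only [twoPointKernelEstimate, taylorPolynomial, add_sub_cancel_left, sub_sub_cancel_left,
    ← neg_smul, iteratedFDeriv_apply_smul_const, smul_smul, ← Finset.sum_smul,
    ← Finset.sum_sub_distrib, Finset.mul_sum, Finset.sum_mul]
  congr 1
  refine Finset.sum_congr rfl fun j _ => ?_
  rw [neg_pow, mul_pow]
  ring

variable {Ω : Type*} {m0 : MeasurableSpace Ω} {P : Measure Ω} {e : Ω → E} {r : Ω → ℝ}
  [MeasurableSpace E] [BorelSpace E] [SecondCountableTopology E]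

lemma integrable_pow_mul_smul_iteratedFDeriv_smul (he_meas : Measurable e)
    (he_norm : ∀ ω, ‖e ω‖ = 1) (hr_meas : Measurable r) (hr : ∀ᵐ ω ∂P, |r ω| ≤ 1)
    (hK_meas : Measurable K) (hK_int : Integrable (fun ω => |K (r ω)|) P) (j : ℕ) :
    Integrable (fun ω => (r ω ^ j * K (r ω)) •
      (iteratedFDeriv ℝ j f x (fun _ => e ω) • e ω)) P := by
  refine (hK_int.mul_const ‖iteratedFDeriv ℝ j f x‖).mono' ?_ ?_
  · exact (((hr_meas.pow_const j).mul (hK_meas.comp hr_meas)).smul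
      (((continuous_iteratedFDeriv_apply_diag j).measurable.comp he_meas).smul
        he_meas)).aestronglyMeasurable
  · filter_upwards [hr] with ω hω
    have hΨ : ‖iteratedFDeriv ℝ j f x (fun _ => e ω)‖ ≤ ‖iteratedFDeriv ℝ j f x‖ := by
      simpa [he_norm ω] using (iteratedFDeriv ℝ j f x).le_opNorm fun _ => e ω
    rw [norm_smul, norm_smul, he_norm ω, mul_one, norm_mul, norm_pow, Real.norm_eq_abs,
      Real.norm_eq_abs]
    gcongr
    exact mul_le_of_le_one_left (abs_nonneg _) (pow_le_one₀ (abs_nonneg _) hω)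

end TaylorPolynomial

section Gradient

variable {E : Type*} [NormedAddCommGroup E] [InnerProductSpace ℝ E] [CompleteSpace E]
  [MeasurableSpace E] [BorelSpace E] [SecondCountableTopology E] {d γ : ℝ} {K : ℝ → ℝ}
  {f : E → ℝ} {l : ℕ} {x : E} {Ω : Type*} {m0 : MeasurableSpace Ω} {P : Measure Ω}
  {e : Ω → E} {r : Ω → ℝ}

lemma integral_twoPointKernelEstimate_taylorPolynomial (hl : 1 ≤ l) (hγ : γ ≠ 0)
    (he_meas : Measurable e) (he_norm : ∀ ω, ‖e ω‖ = 1)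
    (hiso : ∀ v, d • ∫ ω, inner ℝ v (e ω) • e ω ∂P = v) (hr_meas : Measurable r)
    (hr : ∀ᵐ ω ∂P, |r ω| ≤ 1) (hindep : IndepFun e r P) (hK_meas : Measurable K)
    (hK_int : Integrable (fun ω => |K (r ω)|) P) (hK1 : ∫ ω, r ω * K (r ω) ∂P = 1)
    (hKj : ∀ j : ℕ, 2 ≤ j → j ≤ l → ∫ ω, r ω ^ j * K (r ω) ∂P = 0) :
    ∫ ω, twoPointKernelEstimate d γ K (taylorPolynomial f l x) x (e ω) (r ω) ∂P =
      gradient f x := by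
  have hmoment (j : ℕ) :
      ∫ ω, (r ω ^ j * K (r ω)) • (iteratedFDeriv ℝ j f x (fun _ => e ω) • e ω) ∂P =
        (∫ ω, r ω ^ j * K (r ω) ∂P) • ∫ ω, iteratedFDeriv ℝ j f x (fun _ => e ω) • e ω ∂P := by
    exact hindep.symm.integral_fun_comp_smul_comp (f := fun t => t ^ j * K t)
      hr_meas.aemeasurable he_meas.aemeasurable
      ((measurable_id.pow_const j).mul hK_meas).aestronglyMeasurable
      ((continuous_iteratedFDeriv_apply_diag j).smul continuous_id).aestronglyMeasurable
  simp_rw [twoPointKernelEstimate_taylorPolynomial]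
  rw [integral_finsetSum]
  swap
  · exact fun j _ => (integrable_pow_mul_smul_iteratedFDeriv_smul he_meas he_norm hr_meas hr
      hK_meas hK_int j).smul _
  simp_rw [integral_smul, hmoment]
  rw [Finset.sum_eq_single 1 ?_ (by simp; omega)]
  · simp only [pow_one, hK1, one_smul, iteratedFDeriv_one_apply, ← inner_gradient_left]
    convert hiso (gradient f x) using 2
    field_simp
    norm_num
  · intro j hj hj1
    rcases Nat.even_or_odd j with heven | hodd
    · simp [heven.neg_one_pow]
    · have h2 : 2 ≤ j := by
        rcases hodd with ⟨k, rfl⟩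
        omega
      rw [hKj j h2 (by simp at hj; omega)]
      simp

lemma norm_integral_twoPointKernelEstimate_sub_gradient_le {β L : ℝ} (hl : 1 ≤ l) (hd : 0 ≤ d)
    (hγ : 0 < γ) (he_meas : Measurable e) (he_norm : ∀ ω, ‖e ω‖ = 1)
    (hiso : ∀ v, d • ∫ ω, inner ℝ v (e ω) • e ω ∂P = v) (hr_meas : Measurable r)
    (hr : ∀ᵐ ω ∂P, |r ω| ≤ 1) (hindep : IndepFun e r P) (hK_meas : Measurable K)
    (hK_int : Integrable (fun ω => |K (r ω)|) P) (hK1 : ∫ ω, r ω * K (r ω) ∂P = 1)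
    (hKj : ∀ j : ℕ, 2 ≤ j → j ≤ l → ∫ ω, r ω ^ j * K (r ω) ∂P = 0)
    (hKβ_int : Integrable (fun ω => |r ω| ^ β * |K (r ω)|) P)
    (hHolder : ∀ z, |f z - taylorPolynomial f l x z| ≤ L * ‖z - x‖ ^ β)
    (hf_int : Integrable (fun ω => twoPointKernelEstimate d γ K f x (e ω) (r ω)) P) :
    ‖(∫ ω, twoPointKernelEstimate d γ K f x (e ω) (r ω) ∂P) - gradient f x‖ ≤
      (∫ ω, |r ω| ^ β * |K (r ω)| ∂P) * d * L * γ ^ (β - 1) := by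
  have hT_int : Integrable
      (fun ω => twoPointKernelEstimate d γ K (taylorPolynomial f l x) x (e ω) (r ω)) P := by
    simp_rw [twoPointKernelEstimate_taylorPolynomial]
    exact integrable_finsetSum _ fun j _ => (integrable_pow_mul_smul_iteratedFDeriv_smul he_meas
      he_norm hr_meas hr hK_meas hK_int j).smul _
  have hR (ω : Ω) : ‖twoPointKernelEstimate d γ K (fun y => f y - taylorPolynomial f l x y) x
      (e ω) (r ω)‖ ≤ d * L * γ ^ (β - 1) * (|r ω| ^ β * |K (r ω)|) := by
    have hv : ‖(γ * r ω) • e ω‖ = γ * |r ω| := by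
      rw [norm_smul, he_norm ω, mul_one, Real.norm_eq_abs, abs_mul, abs_of_pos hγ]
    have hplus := hHolder (x + (γ * r ω) • e ω)
    have hminus := hHolder (x - (γ * r ω) • e ω)
    rw [add_sub_cancel_left, hv] at hplus
    rw [sub_sub_cancel_left, norm_neg, hv] at hminus
    refine (norm_twoPointKernelEstimate_le hd hγ.le (he_norm ω)
      ((abs_sub _ _).trans (add_le_add hplus hminus))).trans_eq ?_
    rw [Real.mul_rpow hγ.le (abs_nonneg _), Real.rpow_sub_one hγ.ne']
    field_simp
    ring
  calc ‖(∫ ω, twoPointKernelEstimate d γ K f x (e ω) (r ω) ∂P) - gradient f x‖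
      = ‖∫ ω, twoPointKernelEstimate d γ K (fun y => f y - taylorPolynomial f l x y) x
          (e ω) (r ω) ∂P‖ := by
        rw [← integral_twoPointKernelEstimate_taylorPolynomial hl hγ.ne' he_meas he_norm hiso
          hr_meas hr hindep hK_meas hK_int hK1 hKj, ← integral_sub hf_int hT_int]
        simp_rw [twoPointKernelEstimate_sub]
    _ ≤ ∫ ω, d * L * γ ^ (β - 1) * (|r ω| ^ β * |K (r ω)|) ∂P :=
        norm_integral_le_of_norm_le (hKβ_int.const_mul _) (ae_of_all _ hR)
    _ = (∫ ω, |r ω| ^ β * |K (r ω)| ∂P) * d * L * γ ^ (β - 1) := by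
        rw [integral_const_mul]
        ring

end Gradient

section CommonNoise

variable {E Ω Ξ : Type*} [NormedAddCommGroup E] [NormedSpace ℝ E] [MeasurableSpace E]
  [BorelSpace E] [SecondCountableTopology E] {d γ : ℝ} {K : ℝ → ℝ} {x : E}
  {m0 : MeasurableSpace Ω} {P : Measure Ω} [MeasurableSpace Ξ] {ν : Measure Ξ}
  {e : Ω → E} {r : Ω → ℝ} {ξ : Ω → Ξ} {F : E → Ξ → ℝ}

lemma measurable_twoPointKernelEstimate_prod (hF_meas : Measurable (Function.uncurry F))
    (hK_meas : Measurable K) :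
    Measurable fun p : (E × ℝ) × Ξ =>
      twoPointKernelEstimate d γ K (fun y => F y p.2) x p.1.1 p.1.2 :=
  measurable_twoPointKernelEstimate (H := fun (p : (E × ℝ) × Ξ) y => F y p.2)
    (hF_meas.comp (measurable_snd.prodMk (measurable_snd.comp measurable_fst)))
    (measurable_fst.comp measurable_fst) (measurable_snd.comp measurable_fst) hK_meas

lemma integrable_twoPointKernelEstimate_integral [CompleteSpace E] [IsFiniteMeasure P]
    (hF_meas : Measurable (Function.uncurry F)) (hF_int : ∀ y, Integrable (fun s => F y s) ν)
    (he_meas : Measurable e) (hr_meas : Measurable r) (hξ_meas : Measurable ξ)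
    (hξ_law : P.map ξ = ν) (hξ_indep : IndepFun (fun ω => (e ω, r ω)) ξ P)
    (hK_meas : Measurable K)
    (hint : Integrable
      (fun ω => twoPointKernelEstimate d γ K (fun y => F y (ξ ω)) x (e ω) (r ω)) P) :
    Integrable
      (fun ω => twoPointKernelEstimate d γ K (fun y => ∫ s, F y s ∂ν) x (e ω) (r ω)) P := by
  simpa only [integral_twoPointKernelEstimate hF_int] using
    integrable_integral_comp_of_indepFun (he_meas.prodMk hr_meas) hξ_meas hξ_law hξ_indep
      (measurable_twoPointKernelEstimate_prod hF_meas hK_meas).stronglyMeasurable hint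

lemma integral_twoPointKernelEstimate_comp_indepFun [CompleteSpace E] [IsFiniteMeasure P]
    (hF_meas : Measurable (Function.uncurry F)) (hF_int : ∀ y, Integrable (fun s => F y s) ν)
    (he_meas : Measurable e) (hr_meas : Measurable r) (hξ_meas : Measurable ξ)
    (hξ_law : P.map ξ = ν) (hξ_indep : IndepFun (fun ω => (e ω, r ω)) ξ P)
    (hK_meas : Measurable K)
    (hint : Integrable
      (fun ω => twoPointKernelEstimate d γ K (fun y => F y (ξ ω)) x (e ω) (r ω)) P) :
    ∫ ω, twoPointKernelEstimate d γ K (fun y => F y (ξ ω)) x (e ω) (r ω) ∂P =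
      ∫ ω, twoPointKernelEstimate d γ K (fun y => ∫ s, F y s ∂ν) x (e ω) (r ω) ∂P := by
  simpa only [integral_twoPointKernelEstimate hF_int] using
    integral_comp_eq_integral_integral_of_indepFun (he_meas.prodMk hr_meas) hξ_meas hξ_law
      hξ_indep (measurable_twoPointKernelEstimate_prod hF_meas hK_meas).stronglyMeasurable hint

end CommonNoise

theorem kernel_bias_two_point_feedback_general
    {Ω : Type*} {m0 : MeasurableSpace Ω} (P : Measure Ω) [IsProbabilityMeasure P]
    {Ξ : Type*} [MeasurableSpace Ξ] (ν : Measure Ξ)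
    {d : ℕ} (β : ℝ) (l : ℕ) (hβ : 2 ≤ β) (hl' : β ≤ (l : ℝ) + 1)
    (F : EuclideanSpace ℝ (Fin d) → Ξ → ℝ)
    (hF_meas : Measurable (Function.uncurry F))
    (hF_int : ∀ x, Integrable (fun s => F x s) ν)
    (f : EuclideanSpace ℝ (Fin d) → ℝ)
    (hf_def : ∀ x, f x = ∫ s, F x s ∂ν)
    (Lβ : ℝ)
    (hHolder : ∀ x z : EuclideanSpace ℝ (Fin d),
      |f z - ∑ j ∈ Finset.range (l + 1),
          ((j.factorial : ℝ)⁻¹) * iteratedFDeriv ℝ j f x (fun _ => z - x)|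
        ≤ Lβ * ‖z - x‖ ^ β)
    (δ : EuclideanSpace ℝ (Fin d) → ℝ) (Δ : ℝ) (hδ_meas : Measurable δ)
    (hδ : ∀ x, |δ x| ≤ Δ)
    (γ : ℝ) (hγ : 0 < γ)
    (e : Ω → EuclideanSpace ℝ (Fin d)) (r : Ω → ℝ) (ξ : Ω → Ξ) (K : ℝ → ℝ)
    (he_meas : Measurable e) (he_norm : ∀ ω, ‖e ω‖ = 1)
    (he_unif : ∀ O : EuclideanSpace ℝ (Fin d) ≃ₗᵢ[ℝ] EuclideanSpace ℝ (Fin d),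
      Measure.map (fun ω => O (e ω)) P = Measure.map e P)
    (hr_meas : Measurable r)
    (hr_unif : Measure.map r P = (2⁻¹ : ℝ≥0∞) • volume.restrict (Set.Icc (-1 : ℝ) 1))
    (hindep : IndepFun e r P)
    (hξ_meas : Measurable ξ) (hξ_law : Measure.map ξ P = ν)
    (hξ_indep : IndepFun (fun ω => (e ω, r ω)) ξ P)
    (hK_meas : Measurable K)
    (hK1 : ∫ ω, r ω * K (r ω) ∂P = 1)
    (hKj : ∀ j : ℕ, 2 ≤ j → j ≤ l → ∫ ω, (r ω) ^ j * K (r ω) ∂P = 0)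
    (hKβ_int : Integrable (fun ω => |r ω| ^ β * |K (r ω)|) P)
    (hK_int : Integrable (fun ω => |K (r ω)|) P)
    (x : EuclideanSpace ℝ (Fin d))
    (hg_int : Integrable (fun ω =>
      ((d : ℝ) / (2 * γ) *
          ((F (x + (γ * r ω) • e ω) (ξ ω) + δ (x + (γ * r ω) • e ω))
            - (F (x - (γ * r ω) • e ω) (ξ ω) + δ (x - (γ * r ω) • e ω))) * K (r ω)) • e ω) P) :
    ‖(∫ ω, ((d : ℝ) / (2 * γ) *
          ((F (x + (γ * r ω) • e ω) (ξ ω) + δ (x + (γ * r ω) • e ω))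
            - (F (x - (γ * r ω) • e ω) (ξ ω) + δ (x - (γ * r ω) • e ω))) * K (r ω)) • e ω ∂P)
        - gradient f x‖
      ≤ (∫ ω, |r ω| ^ β * |K (r ω)| ∂P) * d * Lβ * γ ^ (β - 1)
        + (∫ ω, |K (r ω)| ∂P) * d * Δ / γ := by
  have hl : 1 ≤ l := by exact_mod_cast (show (1 : ℝ) ≤ l by linarith)
  have hiso (v : EuclideanSpace ℝ (Fin d)) : (d : ℝ) • ∫ ω, inner ℝ v (e ω) • e ω ∂P = v := by
    simpa using HasIsometryInvariantLaw.card_smul_integral_inner_smul he_unif he_meas he_norm v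
  have hr : ∀ᵐ ω ∂P, |r ω| ≤ 1 :=
    (ae_mem_Icc_of_map_eq_smul_restrict hr_meas hr_unif).mono fun _ hω => abs_le.mpr hω
  change ‖(∫ ω, twoPointKernelEstimate d γ K (fun y => F y (ξ ω) + δ y) x (e ω) (r ω) ∂P) -
    gradient f x‖ ≤ _
  change Integrable (fun ω => twoPointKernelEstimate d γ K (fun y => F y (ξ ω) + δ y) x
    (e ω) (r ω)) P at hg_int
  simp_rw [twoPointKernelEstimate_add] at hg_int ⊢
  have hδ_int := integrable_twoPointKernelEstimate_of_abs_le (x := x) (Nat.cast_nonneg d) hγ.le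
    he_meas he_norm hr_meas hK_meas hK_int hδ_meas hδ
  have hFξ_int : Integrable (fun ω => twoPointKernelEstimate d γ K (fun y => F y (ξ ω)) x
      (e ω) (r ω)) P := by
    simpa only [Pi.sub_def, add_sub_cancel_right] using hg_int.sub hδ_int
  have hf_int := integrable_twoPointKernelEstimate_integral hF_meas hF_int he_meas hr_meas hξ_meas
    hξ_law hξ_indep hK_meas hFξ_int
  rw [integral_add hFξ_int hδ_int, integral_twoPointKernelEstimate_comp_indepFun hF_meas hF_int
    he_meas hr_meas hξ_meas hξ_law hξ_indep hK_meas hFξ_int, ← funext hf_def, add_sub_right_comm]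
  rw [← funext hf_def] at hf_int
  exact (norm_add_le _ _).trans (add_le_add
    (norm_integral_twoPointKernelEstimate_sub_gradient_le hl (Nat.cast_nonneg d) hγ he_meas
      he_norm hiso hr_meas hr hindep hK_meas hK_int hK1 hKj hKβ_int (hHolder x) hf_int)
    (norm_integral_twoPointKernelEstimate_le_of_abs_le (Nat.cast_nonneg d) hγ he_norm hK_int hδ))

/-- Bias bound for the two-point kernel-based gradient approximation of the
expectation `f(x) = E_ξ[F(x,ξ)]`, where `f` belongs to the Hölder class `F_β(L_β)`, both
evaluations use the same realization `ξ` (distributed according to `ν`, independent of `(e,r)`),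
and the oracle carries bounded adversarial deterministic noise `δ` with `|δ| ≤ Δ`:
`‖E[g̃(x,ξ,e,r)] − ∇f(x)‖ ≤ κ_β d L_β γ^{β−1} + κ₁ d Δ / γ`. -/
theorem kernel_bias_two_point_feedback
    {Ω : Type*} {m0 : MeasurableSpace Ω} (P : Measure Ω) [IsProbabilityMeasure P]
    {Ξ : Type*} [MeasurableSpace Ξ] (ν : Measure Ξ) [IsProbabilityMeasure ν]
    {d : ℕ} (β : ℝ) (l : ℕ) (hβ : 2 ≤ β) (hl : (l : ℝ) < β) (hl' : β ≤ (l : ℝ) + 1)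
    (F : EuclideanSpace ℝ (Fin d) → Ξ → ℝ)
    (hF_meas : Measurable (Function.uncurry F))
    (hF_int : ∀ x, Integrable (fun s => F x s) ν)
    (f : EuclideanSpace ℝ (Fin d) → ℝ)
    (hf_def : ∀ x, f x = ∫ s, F x s ∂ν)
    (Lβ : ℝ)
    (hf : ContDiff ℝ (l : ℕ∞) f)
    (hHolder : ∀ x z : EuclideanSpace ℝ (Fin d),
      |f z - ∑ j ∈ Finset.range (l + 1),
          ((j.factorial : ℝ)⁻¹) * iteratedFDeriv ℝ j f x (fun _ => z - x)|
        ≤ Lβ * ‖z - x‖ ^ β)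
    (δ : EuclideanSpace ℝ (Fin d) → ℝ) (Δ : ℝ) (hδ_meas : Measurable δ)
    (hδ : ∀ x, |δ x| ≤ Δ)
    (γ : ℝ) (hγ : 0 < γ)
    (e : Ω → EuclideanSpace ℝ (Fin d)) (r : Ω → ℝ) (ξ : Ω → Ξ) (K : ℝ → ℝ)
    (he_meas : Measurable e) (he_norm : ∀ ω, ‖e ω‖ = 1)
    (he_unif : ∀ O : EuclideanSpace ℝ (Fin d) ≃ₗᵢ[ℝ] EuclideanSpace ℝ (Fin d),
      Measure.map (fun ω => O (e ω)) P = Measure.map e P)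
    (hr_meas : Measurable r)
    (hr_unif : Measure.map r P = (2⁻¹ : ℝ≥0∞) • volume.restrict (Set.Icc (-1 : ℝ) 1))
    (hindep : IndepFun e r P)
    (hξ_meas : Measurable ξ) (hξ_law : Measure.map ξ P = ν)
    (hξ_indep : IndepFun (fun ω => (e ω, r ω)) ξ P)
    (hK_meas : Measurable K)
    (hK0 : ∫ ω, K (r ω) ∂P = 0)
    (hK1 : ∫ ω, r ω * K (r ω) ∂P = 1)
    (hKj : ∀ j : ℕ, 2 ≤ j → j ≤ l → ∫ ω, (r ω) ^ j * K (r ω) ∂P = 0)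
    (hKβ_int : Integrable (fun ω => |r ω| ^ β * |K (r ω)|) P)
    (hK_int : Integrable (fun ω => |K (r ω)|) P)
    (x : EuclideanSpace ℝ (Fin d))
    (hg_int : Integrable (fun ω =>
      ((d : ℝ) / (2 * γ) *
          ((F (x + (γ * r ω) • e ω) (ξ ω) + δ (x + (γ * r ω) • e ω))
            - (F (x - (γ * r ω) • e ω) (ξ ω) + δ (x - (γ * r ω) • e ω))) * K (r ω)) • e ω) P) :
    ‖(∫ ω, ((d : ℝ) / (2 * γ) *
          ((F (x + (γ * r ω) • e ω) (ξ ω) + δ (x + (γ * r ω) • e ω))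
            - (F (x - (γ * r ω) • e ω) (ξ ω) + δ (x - (γ * r ω) • e ω))) * K (r ω)) • e ω ∂P)
        - gradient f x‖
      ≤ (∫ ω, |r ω| ^ β * |K (r ω)| ∂P) * d * Lβ * γ ^ (β - 1)
        + (∫ ω, |K (r ω)| ∂P) * d * Δ / γ :=
  kernel_bias_two_point_feedback_general (m0 := m0) P ν β l hβ hl' F hF_meas hF_int f hf_def Lβ
    hHolder δ Δ hδ_meas hδ γ hγ e r ξ K he_meas he_norm he_unif hr_meas hr_unif hindep hξ_meas
    hξ_law hξ_indep hK_meas hK1 hKj hKβ_int hK_int x hg_int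
end
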